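/- arXiv:2202.13629 — 6 statements merged into one kernel-verified Lean document; each statement's English description precedes it below -/
import Mathlib

section
/- Let u : U → ℝ be uniformly concave with constant −1 on a convex set U ⊆ ℝⁿ (in the sense that ⟨p₂−p₁, x₂−x₁⟩ ≤ −|x₂−x₁|² whenever pᵢ ∈ D⁺u(xᵢ)). Let x ∈ U, θ ∈ Sⁿ⁻¹, and suppose xᵢ ∈ U \ {x}, pᵢ ∈ D⁺u(xᵢ) satisfy xᵢ → x, (xᵢ−x)/|xᵢ−x| → θ, and pᵢ → p ∈ ℝⁿ. If D⁺u is upper semicontinuous at x, then p ∈ epf(D⁺u(x), θ), i.e., ⟨p,θ⟩ ≤ ⟨q,θ⟩ for all q ∈ D⁺u(x). -/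
/-! Against any `q ∈ D⁺u(x)`, uniform concavity gives `⟨pᵢ - q, xᵢ - x⟩ ≤ 0`; dividing by
`‖xᵢ - x‖` and passing to the limit yields `⟨p - q, θ⟩ ≤ 0`. That `p ∈ D⁺u(x)` at all is
exactly upper semicontinuity. -/

open Set Filter Topology

/-- The superdifferential of `u` at `x`, relative to the set `U`. -/
def DplusOn {n : ℕ} (u : EuclideanSpace ℝ (Fin n) → ℝ) (U : Set (EuclideanSpace ℝ (Fin n)))
    (x : EuclideanSpace ℝ (Fin n)) : Set (EuclideanSpace ℝ (Fin n)) :=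
  {p | ∀ ε > 0, ∀ᶠ y in nhdsWithin x U, u y - u x - (inner ℝ p (y - x) : ℝ) ≤ ε * ‖y - x‖}

theorem inner_le_inner_of_tendsto_direction {E ι : Type*} [NormedAddCommGroup E]
    [InnerProductSpace ℝ E] {l : Filter ι} [l.NeBot] {x q p θ : E} {xs ps : ι → E}
    (hmono : ∀ᶠ i in l, inner ℝ (ps i - q) (xs i - x) ≤ 0)
    (hdir : Tendsto (fun i => ‖xs i - x‖⁻¹ • (xs i - x)) l (𝓝 θ))
    (hp : Tendsto ps l (𝓝 p)) :
    inner ℝ p θ ≤ inner ℝ q θ := by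
  have hlim : Tendsto (fun i => inner ℝ (ps i - q) (‖xs i - x‖⁻¹ • (xs i - x))) l
      (𝓝 (inner ℝ (p - q) θ)) :=
    (hp.sub tendsto_const_nhds).inner hdir
  have hnonpos : inner ℝ (p - q) θ ≤ 0 := by
    refine le_of_tendsto hlim (hmono.mono fun i hi => ?_)
    rw [real_inner_smul_right]
    exact mul_nonpos_of_nonneg_of_nonpos (inv_nonneg.mpr (norm_nonneg _)) hi
  rw [inner_sub_left] at hnonpos
  linarith

theorem limit_superdifferential_in_exposed_face_general {n : ℕ}
    (U : Set (EuclideanSpace ℝ (Fin n)))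
    (u : EuclideanSpace ℝ (Fin n) → ℝ)
    (hconc : ∀ x₁ ∈ U, ∀ x₂ ∈ U, ∀ p₁ ∈ DplusOn u U x₁, ∀ p₂ ∈ DplusOn u U x₂,
      (inner ℝ (p₂ - p₁) (x₂ - x₁) : ℝ) ≤ -‖x₂ - x₁‖ ^ 2)
    -- upper semicontinuity of `y ↦ D⁺u(y)` at `x`: limits of superdifferentials at
    -- nearby points lie in `D⁺u(x)`
    (husc : ∀ (y q : ℕ → EuclideanSpace ℝ (Fin n)) (z l : EuclideanSpace ℝ (Fin n)),
      (∀ i, y i ∈ U) → (∀ i, q i ∈ DplusOn u U (y i)) →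
      Tendsto y atTop (nhds z) → Tendsto q atTop (nhds l) → z ∈ U → l ∈ DplusOn u U z)
    (x : EuclideanSpace ℝ (Fin n)) (hx : x ∈ U)
    (θ : EuclideanSpace ℝ (Fin n))
    (xi pi : ℕ → EuclideanSpace ℝ (Fin n))
    (hxi : ∀ i, xi i ∈ U \ {x}) (hpi : ∀ i, pi i ∈ DplusOn u U (xi i))
    (p : EuclideanSpace ℝ (Fin n))
    (hlim₁ : Tendsto xi atTop (nhds x))
    (hlim₂ : Tendsto (fun i => ‖xi i - x‖⁻¹ • (xi i - x)) atTop (nhds θ))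
    (hlim₃ : Tendsto pi atTop (nhds p)) :
    p ∈ DplusOn u U x ∧ ∀ q ∈ DplusOn u U x, (inner ℝ p θ : ℝ) ≤ (inner ℝ q θ : ℝ) := by
  refine ⟨husc xi pi x p (fun i => (hxi i).1) hpi hlim₁ hlim₃ hx, fun q hq => ?_⟩
  have hmono : ∀ i, inner ℝ (pi i - q) (xi i - x) ≤ 0 := fun i =>
    (hconc x hx (xi i) (hxi i).1 q hq (pi i) (hpi i)).trans (neg_nonpos.mpr (sq_nonneg _))
  exact inner_le_inner_of_tendsto_direction (Eventually.of_forall hmono) hlim₂ hlim₃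

theorem limit_superdifferential_in_exposed_face {n : ℕ}
    (U : Set (EuclideanSpace ℝ (Fin n))) (hU : Convex ℝ U)
    (u : EuclideanSpace ℝ (Fin n) → ℝ)
    (hconc : ∀ x₁ ∈ U, ∀ x₂ ∈ U, ∀ p₁ ∈ DplusOn u U x₁, ∀ p₂ ∈ DplusOn u U x₂,
      (inner ℝ (p₂ - p₁) (x₂ - x₁) : ℝ) ≤ -‖x₂ - x₁‖ ^ 2)
    -- upper semicontinuity of `y ↦ D⁺u(y)` at `x`: limits of superdifferentials at
    -- nearby points lie in `D⁺u(x)`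
    (husc : ∀ (y q : ℕ → EuclideanSpace ℝ (Fin n)) (z l : EuclideanSpace ℝ (Fin n)),
      (∀ i, y i ∈ U) → (∀ i, q i ∈ DplusOn u U (y i)) →
      Tendsto y atTop (nhds z) → Tendsto q atTop (nhds l) → z ∈ U → l ∈ DplusOn u U z)
    (x : EuclideanSpace ℝ (Fin n)) (hx : x ∈ U)
    (θ : EuclideanSpace ℝ (Fin n)) (hθ : ‖θ‖ = 1)
    (xi pi : ℕ → EuclideanSpace ℝ (Fin n))
    (hxi : ∀ i, xi i ∈ U \ {x}) (hpi : ∀ i, pi i ∈ DplusOn u U (xi i))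
    (p : EuclideanSpace ℝ (Fin n))
    (hlim₁ : Tendsto xi atTop (nhds x))
    (hlim₂ : Tendsto (fun i => ‖xi i - x‖⁻¹ • (xi i - x)) atTop (nhds θ))
    (hlim₃ : Tendsto pi atTop (nhds p)) :
    p ∈ DplusOn u U x ∧ ∀ q ∈ DplusOn u U x, (inner ℝ p θ : ℝ) ≤ (inner ℝ q θ : ℝ) :=
  limit_superdifferential_in_exposed_face_general U u hconc husc x hx θ xi pi hxi hpi p hlim₁ hlim₂
    hlim₃
end

section
/- Let u : Ω → ℝ be a semiconcave viscosity solution of H(x, Du(x), u(x)) = 0 with H(x,·,w) strictly convex and C¹, and suppose ext(D⁺u(x)) = D*u(x) = {p ∈ D⁺u(x) : H(x,p,u(x)) = 0} for every x. Then for each x there is a unique p#(x) ∈ D⁺u(x) minimizing p ↦ H(x,p,u(x)) over D⁺u(x), and if x ∈ Σ(u) (D⁺u(x) is not a singleton), then H(x, p#(x), u(x)) < 0 and p#(x) ∈ D⁺u(x) \ D*u(x). -/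
open Set Filter Topology MeasureTheory

/-- The set of reachable (limiting) gradients of `u` at `x` relative to `U`. -/
def Dstar {n : ℕ} (u : EuclideanSpace ℝ (Fin n) → ℝ) (U : Set (EuclideanSpace ℝ (Fin n)))
    (x : EuclideanSpace ℝ (Fin n)) : Set (EuclideanSpace ℝ (Fin n)) :=
  {p | ∃ z : ℕ → EuclideanSpace ℝ (Fin n),
    (∀ i, z i ∈ U \ {x} ∧ DifferentiableAt ℝ u (z i)) ∧
    Tendsto z atTop (nhds x) ∧
    Tendsto (fun i => gradient u (z i)) atTop (nhds p)}

/-- `u` is semiconcave with linear modulus and constant `C` on the convex set `S`. -/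
def SemiconcaveOn {n : ℕ} (u : EuclideanSpace ℝ (Fin n) → ℝ)
    (S : Set (EuclideanSpace ℝ (Fin n))) (C : ℝ) : Prop :=
  ∀ x ∈ S, ∀ y ∈ S, ∀ lam ∈ Set.Icc (0 : ℝ) 1,
    lam * u x + (1 - lam) * u y - u (lam • x + (1 - lam) • y) ≤
      (C / 2) * lam * (1 - lam) * ‖x - y‖ ^ 2

/-- `u` is locally semiconcave on the open set `Ω`. -/
def LocallySemiconcaveOn {n : ℕ} (u : EuclideanSpace ℝ (Fin n) → ℝ)
    (Ω : Set (EuclideanSpace ℝ (Fin n))) : Prop :=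
  ∀ x ∈ Ω, ∃ r > 0, ∃ C : ℝ, Metric.ball x r ⊆ Ω ∧ SemiconcaveOn u (Metric.ball x r) C

/-!
Semiconcavity makes `u - C/2 ‖· - x‖²` concave on a ball around `x`, and `D⁺u(x)` is exactly
the set of its supergradients at `x`. Hence `D⁺u(x)` is convex, closed, nonempty (Hahn–Banach
separation from the strict hypograph) and bounded (a supergradient of a function bounded below on
a ball is bounded), so compact. The continuous, strictly convex `H(x, ·, u(x))` then has a unique
minimiser on it. If `D⁺u(x)` is not a singleton, Krein–Milman yields two distinct extreme points;
`H(x, ·, u(x))` vanishes at both, so by strict convexity it is negative at their midpoint. The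
minimum is therefore negative, and the minimiser is not a reachable gradient, since `H` vanishes
on `D*u(x)`.
-/

open Metric

section ConvexAnalysis

variable {E : Type*} [AddCommGroup E] [Module ℝ E]

lemma StrictConvexOn.exists_lt_of_ne {K : Set E} {f : E → ℝ} (hf : StrictConvexOn ℝ K f)
    {a b : E} (ha : a ∈ K) (hb : b ∈ K) (hab : a ≠ b) {c : ℝ} (hfa : f a ≤ c) (hfb : f b ≤ c) :
    ∃ q ∈ K, f q < c := by
  refine ⟨(1 / 2 : ℝ) • a + (1 / 2 : ℝ) • b, hf.1 ha hb (by norm_num) (by norm_num) (by norm_num),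
    ?_⟩
  calc f ((1 / 2 : ℝ) • a + (1 / 2 : ℝ) • b) < (1 / 2 : ℝ) • f a + (1 / 2 : ℝ) • f b :=
        hf.2 ha hb hab (by norm_num) (by norm_num) (by norm_num)
    _ ≤ c := by simp only [smul_eq_mul]; linarith

variable [TopologicalSpace E]

lemma IsCompact.existsUnique_isMinOn_of_strictConvexOn {K : Set E} {f : E → ℝ}
    (hK : IsCompact K) (hne : K.Nonempty) (hf : StrictConvexOn ℝ K f) (hfc : ContinuousOn f K) :
    ∃! p, p ∈ K ∧ IsMinOn f K p := by
  obtain ⟨p, hpK, hp⟩ := hK.exists_isMinOn hne hfc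
  exact ⟨p, ⟨hpK, hp⟩, fun q hq => hf.eq_of_isMinOn hq.2 hp hq.1 hpK⟩

variable [T2Space E] [IsTopologicalAddGroup E] [ContinuousSMul ℝ E] [LocallyConvexSpace ℝ E]

lemma IsCompact.extremePoints_nontrivial {K : Set E} (hK : IsCompact K) (hKc : Convex ℝ K)
    (hne : K.Nonempty) (hns : ¬∃ p, K = {p}) : (K.extremePoints ℝ).Nontrivial := by
  refine (hK.extremePoints_nonempty hne).exists_eq_singleton_or_nontrivial.resolve_left ?_
  rintro ⟨e, he⟩
  refine hns ⟨e, ?_⟩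
  rw [← closure_convexHull_extremePoints hK hKc, he, convexHull_singleton, closure_singleton]

end ConvexAnalysis

lemma ConcaveOn.exists_le_add_dual {E : Type*} [NormedAddCommGroup E] [NormedSpace ℝ E]
    {s : Set E} {v : E → ℝ} (hs : IsOpen s)
    (hv : ConcaveOn ℝ s v) (hvc : ContinuousOn v s) {x : E} (hx : x ∈ s) :
    ∃ g : StrongDual ℝ E, ∀ y ∈ s, v y ≤ v x + g (y - x) := by
  set O : Set (E × ℝ) := {z | z.1 ∈ s ∧ z.2 < v z.1}
  have hO : IsOpen O := by
    have hcont : ContinuousOn (fun z : E × ℝ => (z.2, v z.1)) (s ×ˢ univ) :=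
      continuousOn_snd.prodMk (hvc.comp continuousOn_fst fun z hz => hz.1)
    convert hcont.isOpen_inter_preimage (hs.prod isOpen_univ)
      (isOpen_lt continuous_fst continuous_snd) using 1
    ext z
    simp [O]
  obtain ⟨f, hf⟩ := geometric_hahn_banach_open_point hv.convex_strict_hypograph hO
    (fun h => lt_irrefl _ h.2 : (x, v x) ∉ O)
  set c := f (0, 1)
  have hsplit : ∀ y t, f (y, t) = f (y, 0) + t * c := fun y t => by
    rw [← smul_eq_mul, ← map_smul, ← map_add]; simp
  have hc : 0 < c := by
    have := hf (x, v x - 1) ⟨hx, by linarith⟩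
    rw [hsplit x (v x - 1), hsplit x (v x)] at this
    nlinarith
  -- the separating hyperplane is the graph of `y ↦ v x - c⁻¹ f (y - x, 0)`
  refine ⟨-c⁻¹ • f.comp (ContinuousLinearMap.inl ℝ E ℝ), fun y hy => le_of_forall_lt fun t ht => ?_⟩
  have hsep := hf (y, t) ⟨hy, ht⟩
  rw [hsplit y t, hsplit x (v x)] at hsep
  have hlin : f (y - x, 0) = f (y, 0) - f (x, 0) := by
    rw [← map_sub, Prod.mk_sub_mk, sub_zero]
  have : t - v x < (f (x, 0) - f (y, 0)) / c := by rw [lt_div_iff₀ hc]; linarith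
  simp only [smul_apply, ContinuousLinearMap.comp_apply,
    ContinuousLinearMap.inl_apply, smul_eq_mul, hlin]
  rw [neg_mul_comm, neg_sub, inv_mul_eq_div]
  linarith

lemma norm_mul_le_of_le_add_inner {F : Type*} [NormedAddCommGroup F] [InnerProductSpace ℝ F]
    {v : F → ℝ} {x p : F} {ρ m : ℝ} (hρ : 0 ≤ ρ)
    (hm : ∀ y ∈ closedBall x ρ, m ≤ v y)
    (hp : ∀ y ∈ closedBall x ρ, v y ≤ v x + inner ℝ p (y - x)) :
    ‖p‖ * ρ ≤ v x - m := by
  rcases eq_or_ne p 0 with rfl | hp0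
  · simpa using hm x (mem_closedBall_self hρ)
  set y := x - (ρ / ‖p‖) • p
  have hyx : y - x = -((ρ / ‖p‖) • p) := by simp [y]
  have hy : y ∈ closedBall x ρ := by
    rw [mem_closedBall, dist_eq_norm, hyx, norm_neg, norm_smul, Real.norm_of_nonneg (by positivity),
      div_mul_cancel₀ _ (norm_ne_zero_iff.2 hp0)]
  have hinner : inner ℝ p (y - x) = -(‖p‖ * ρ) := by
    rw [hyx, inner_neg_right, real_inner_smul_right, real_inner_self_eq_norm_sq]
    field_simp
  linarith [hm y hy, hp y hy]

section Superdifferential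

variable {n : ℕ}

local notation "ℝⁿ" => EuclideanSpace ℝ (Fin n)

lemma convex_dplusOn (u : ℝⁿ → ℝ) (U : Set ℝⁿ) (x : ℝⁿ) : Convex ℝ (DplusOn u U x) := by
  intro p hp q hq a b ha hb hab ε hε
  filter_upwards [hp ε hε, hq ε hε] with y hpy hqy
  rw [inner_add_left, real_inner_smul_left, real_inner_smul_left]
  linear_combination a * hpy + b * hqy - (u y - u x - ε * ‖y - x‖) * hab

lemma isClosed_dplusOn (u : ℝⁿ → ℝ) (U : Set ℝⁿ) (x : ℝⁿ) : IsClosed (DplusOn u U x) := by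
  rw [← closure_subset_iff_isClosed]
  intro p hp ε hε
  obtain ⟨q, hq, hpq⟩ := Metric.mem_closure_iff.1 hp (ε / 2) (half_pos hε)
  filter_upwards [hq (ε / 2) (half_pos hε)] with y hy
  have : inner ℝ (q - p) (y - x) ≤ ε / 2 * ‖y - x‖ :=
    (real_inner_le_norm _ _).trans (by rw [← dist_eq_norm']; gcongr)
  rw [inner_sub_left] at this
  linarith

lemma mem_dplusOn_inner (p : ℝⁿ) (U : Set ℝⁿ) (x : ℝⁿ) :
    p ∈ DplusOn (fun y => inner ℝ p y) U x := by
  intro ε hε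
  filter_upwards with y
  rw [inner_sub_right, sub_self]
  positivity

lemma mem_dplusOn_of_le_add_sq {u w : ℝⁿ → ℝ} {U : Set ℝⁿ} {x p : ℝⁿ} (hp : p ∈ DplusOn w U x)
    (C : ℝ) (h : ∀ᶠ y in 𝓝 x, u y - u x ≤ w y - w x + C * ‖y - x‖ ^ 2) :
    p ∈ DplusOn u U x := by
  intro ε hε
  have hsmall : ∀ᶠ y in 𝓝 x, C * ‖y - x‖ ≤ ε / 2 := by
    have : Tendsto (fun y => C * ‖y - x‖) (𝓝 x) (𝓝 0) := by
      simpa using ((continuous_id.sub continuous_const).norm.const_mul C).tendsto' x _ (by simp)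
    exact this.eventually_le_const (half_pos hε)
  filter_upwards [nhdsWithin_le_nhds h, nhdsWithin_le_nhds hsmall, hp (ε / 2) (half_pos hε)]
    with y huw hC hw
  have : C * ‖y - x‖ ^ 2 ≤ ε / 2 * ‖y - x‖ := by
    rw [sq, ← mul_assoc]; exact mul_le_mul_of_nonneg_right hC (norm_nonneg _)
  linarith

lemma ConcaveOn.le_add_inner_of_mem_dplusOn {v : ℝⁿ → ℝ} {s U : Set ℝⁿ} {x p : ℝⁿ}
    (hv : ConcaveOn ℝ s v) (hsU : s ⊆ U) (hx : x ∈ s) (hp : p ∈ DplusOn v U x) :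
    ∀ y ∈ s, v y ≤ v x + inner ℝ p (y - x) := by
  intro y hy
  refine le_of_forall_pos_le_add fun ε hε => ?_
  set ε' := ε / (‖y - x‖ + 1)
  have hε' : 0 < ε' := by positivity
  have hseg : ∀ t ∈ Ioc (0 : ℝ) 1, x + t • (y - x) ∈ s := fun t ht =>
    hv.1.add_smul_sub_mem hx hy (Ioc_subset_Icc_self ht)
  have hIoc : Ioc (0 : ℝ) 1 ∈ 𝓝[>] 0 := Ioc_mem_nhdsGT one_pos
  have hlim : Tendsto (fun t : ℝ => x + t • (y - x)) (𝓝[>] 0) (𝓝[U] x) := by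
    refine tendsto_nhdsWithin_iff.2 ⟨?_, eventually_of_mem hIoc fun t ht => hsU (hseg t ht)⟩
    refine tendsto_nhdsWithin_of_tendsto_nhds ?_
    exact (by fun_prop : Continuous fun t : ℝ => x + t • (y - x)).tendsto' 0 x (by simp)
  obtain ⟨t, hpt, ht⟩ := ((hlim.eventually (hp ε' hε')).and hIoc).exists
  -- on the segment, `t (v y - v x) ≤ v (x + t (y - x)) - v x ≤ t ⟪p, y - x⟫ + ε' t ‖y - x‖`
  have hconc := hv.2 hx hy (sub_nonneg.2 ht.2) ht.1.le (sub_add_cancel 1 t)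
  rw [show (1 - t) • x + t • y = x + t • (y - x) by module] at hconc
  rw [add_sub_cancel_left, real_inner_smul_right, norm_smul, Real.norm_of_nonneg ht.1.le] at hpt
  have hε'ε : ε' * ‖y - x‖ ≤ ε := by
    rw [div_mul_eq_mul_div, div_le_iff₀ (by positivity)]
    nlinarith [norm_nonneg (y - x)]
  have : t * v y ≤ t * (v x + inner ℝ p (y - x) + ε' * ‖y - x‖) := by
    simp only [smul_eq_mul] at hconc
    nlinarith
  linarith [le_of_mul_le_mul_left this ht.1]

variable {u : EuclideanSpace ℝ (Fin n) → ℝ} {U S : Set (EuclideanSpace ℝ (Fin n))}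
  {x : EuclideanSpace ℝ (Fin n)} {r C : ℝ}

lemma SemiconcaveOn.strongConcaveOn (hS : Convex ℝ S) (h : SemiconcaveOn u S C) :
    StrongConcaveOn S (-C) u := by
  refine ⟨hS, fun a ha b hb s t hs ht hst => ?_⟩
  obtain rfl : t = 1 - s := by linarith
  have := h a ha b hb s ⟨hs, by linarith⟩
  simp only [smul_eq_mul]
  linarith

lemma SemiconcaveOn.concaveOn_sub_sq (hS : Convex ℝ S) (h : SemiconcaveOn u S C) (z : ℝⁿ) :
    ConcaveOn ℝ S (fun y => u y - C / 2 * ‖y - z‖ ^ 2) := by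
  have hsq := strongConcaveOn_iff_convex.1 (h.strongConcaveOn hS)
  have haff : ConcaveOn ℝ S (fun y => C * inner ℝ z y - C / 2 * ‖z‖ ^ 2) :=
    ((C • innerₗ ℝⁿ z).concaveOn hS).add (concaveOn_const _ hS)
  refine (hsq.add haff).congr fun y _ => ?_
  simp only [Pi.add_apply, norm_sub_sq_real, real_inner_comm z y]
  ring

lemma SemiconcaveOn.dplusOn_nonempty (hr : 0 < r) (h : SemiconcaveOn u (ball x r) C) :
    (DplusOn u U x).Nonempty := by
  have hv := h.concaveOn_sub_sq (convex_ball x r) x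
  obtain ⟨g, hg⟩ := hv.exists_le_add_dual isOpen_ball (hv.continuousOn isOpen_ball)
    (mem_ball_self hr)
  refine ⟨(InnerProductSpace.toDual ℝ ℝⁿ).symm g,
    mem_dplusOn_of_le_add_sq (mem_dplusOn_inner _ U x) (C / 2) ?_⟩
  filter_upwards [ball_mem_nhds x hr] with y hy
  have := hg y hy
  simp only [InnerProductSpace.toDual_symm_apply, map_sub, sub_self, norm_zero] at this ⊢
  linarith

lemma SemiconcaveOn.isCompact_dplusOn (hr : 0 < r) (hball : ball x r ⊆ U)
    (h : SemiconcaveOn u (ball x r) C) : IsCompact (DplusOn u U x) := by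
  set v : ℝⁿ → ℝ := fun y => u y - C / 2 * ‖y - x‖ ^ 2
  have hv : ConcaveOn ℝ (ball x r) v := h.concaveOn_sub_sq (convex_ball x r) x
  have hsub : closedBall x (r / 2) ⊆ ball x r := closedBall_subset_ball (half_lt_self hr)
  obtain ⟨m, hm⟩ := (isCompact_closedBall x (r / 2)).bddBelow_image
    ((hv.continuousOn isOpen_ball).mono hsub)
  refine (isCompact_closedBall 0 ((v x - m) / (r / 2))).of_isClosed_subset
    (isClosed_dplusOn u U x) fun p hp => ?_
  have hpv : p ∈ DplusOn v U x := mem_dplusOn_of_le_add_sq hp (-(C / 2)) <|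
    Eventually.of_forall fun y => by simp only [v, sub_self, norm_zero]; linarith
  have hsuper := hv.le_add_inner_of_mem_dplusOn hball (mem_ball_self hr) hpv
  rw [mem_closedBall_zero_iff, le_div_iff₀ (half_pos hr)]
  exact norm_mul_le_of_le_add_inner (half_pos hr).le (fun y hy => hm ⟨y, hy, rfl⟩)
    fun y hy => hsuper y (hsub hy)

end Superdifferential

theorem min_superdifferential_of_viscosity_solution_general {n : ℕ}
    (Ω : Set (EuclideanSpace ℝ (Fin n)))
    (H : EuclideanSpace ℝ (Fin n) → EuclideanSpace ℝ (Fin n) → ℝ → ℝ)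
    (u : EuclideanSpace ℝ (Fin n) → ℝ)
    -- `H` is `C¹` and strictly convex in `p`
    (hHconv : ∀ x w, StrictConvexOn ℝ Set.univ (fun p => H x p w))
    -- `u` is a (semiconcave) viscosity solution: locally semiconcave and solves the
    -- equation almost everywhere
    (husc : LocallySemiconcaveOn u Ω)
    -- the structural identity `ext(D⁺u(x)) = D*u(x) = {p ∈ D⁺u(x) : H(x,p,u(x)) = 0}`
    (hstruct : ∀ x ∈ Ω,
      Set.extremePoints ℝ (DplusOn u Ω x) = Dstar u Ω x ∧
      Dstar u Ω x = {p ∈ DplusOn u Ω x | H x p (u x) = 0}) :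
    ∀ x ∈ Ω,
      (∃! p, p ∈ DplusOn u Ω x ∧ ∀ q ∈ DplusOn u Ω x, H x p (u x) ≤ H x q (u x)) ∧
      (¬(∃ p, DplusOn u Ω x = {p}) →
        ∀ p, (p ∈ DplusOn u Ω x ∧ ∀ q ∈ DplusOn u Ω x, H x p (u x) ≤ H x q (u x)) →
          H x p (u x) < 0 ∧ p ∈ DplusOn u Ω x \ Dstar u Ω x) := by
  intro x hx
  obtain ⟨r, hr, C, hball, hsc⟩ := husc x hx
  have hK : IsCompact (DplusOn u Ω x) := hsc.isCompact_dplusOn hr hball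
  have hKne : (DplusOn u Ω x).Nonempty := hsc.dplusOn_nonempty hr
  have hKconv : Convex ℝ (DplusOn u Ω x) := convex_dplusOn u Ω x
  have hH := (hHconv x (u x)).subset (subset_univ _) hKconv
  have hHcont : ContinuousOn (fun p => H x p (u x)) (DplusOn u Ω x) :=
    ((hHconv x (u x)).convexOn.continuousOn isOpen_univ).mono (subset_univ _)
  refine ⟨hK.existsUnique_isMinOn_of_strictConvexOn hKne hH hHcont, fun hns p hp => ?_⟩
  obtain ⟨hext, hDstar⟩ := hstruct x hx
  have hzero : ∀ e ∈ (DplusOn u Ω x).extremePoints ℝ, e ∈ DplusOn u Ω x ∧ H x e (u x) = 0 := by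
    rw [hext, hDstar]
    exact fun e he => he
  obtain ⟨e₁, he₁, e₂, he₂, hne⟩ := hK.extremePoints_nontrivial hKconv hKne hns
  obtain ⟨q, hq, hHq⟩ := hH.exists_lt_of_ne (hzero e₁ he₁).1 (hzero e₂ he₂).1 hne
    (hzero e₁ he₁).2.le (hzero e₂ he₂).2.le
  have hneg : H x p (u x) < 0 := (hp.2 q hq).trans_lt hHq
  refine ⟨hneg, hp.1, fun hpD => ?_⟩
  rw [hDstar] at hpD
  exact hneg.ne hpD.2

theorem min_superdifferential_of_viscosity_solution {n : ℕ}
    (Ω : Set (EuclideanSpace ℝ (Fin n))) (hΩopen : IsOpen Ω) (hΩconn : IsConnected Ω)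
    (H : EuclideanSpace ℝ (Fin n) → EuclideanSpace ℝ (Fin n) → ℝ → ℝ)
    (u : EuclideanSpace ℝ (Fin n) → ℝ)
    -- `H` is `C¹` and strictly convex in `p`
    (hH : ContDiff ℝ 1 (fun q : (EuclideanSpace ℝ (Fin n) × EuclideanSpace ℝ (Fin n)) × ℝ =>
      H q.1.1 q.1.2 q.2))
    (hHconv : ∀ x w, StrictConvexOn ℝ Set.univ (fun p => H x p w))
    -- `u` is a (semiconcave) viscosity solution: locally semiconcave and solves the
    -- equation almost everywhere
    (husc : LocallySemiconcaveOn u Ω)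
    (hae : ∀ᵐ x ∂(volume.restrict Ω), DifferentiableAt ℝ u x ∧ H x (gradient u x) (u x) = 0)
    -- the structural identity `ext(D⁺u(x)) = D*u(x) = {p ∈ D⁺u(x) : H(x,p,u(x)) = 0}`
    (hstruct : ∀ x ∈ Ω,
      Set.extremePoints ℝ (DplusOn u Ω x) = Dstar u Ω x ∧
      Dstar u Ω x = {p ∈ DplusOn u Ω x | H x p (u x) = 0}) :
    ∀ x ∈ Ω,
      (∃! p, p ∈ DplusOn u Ω x ∧ ∀ q ∈ DplusOn u Ω x, H x p (u x) ≤ H x q (u x)) ∧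
      (¬(∃ p, DplusOn u Ω x = {p}) →
        ∀ p, (p ∈ DplusOn u Ω x ∧ ∀ q ∈ DplusOn u Ω x, H x p (u x) ≤ H x q (u x)) →
          H x p (u x) < 0 ∧ p ∈ DplusOn u Ω x \ Dstar u Ω x) :=
  min_superdifferential_of_viscosity_solution_general Ω H u hHconv husc hstruct
end

section
/- Let γ : [0, τ₀] → ℝⁿ be Lipschitz with arc length function l. For t ∈ [0,τ₀] define τ₁(t) = inf{τ ∈ [0,t] : γ(r) = γ(t) for all r ∈ [τ,t]} and τ₂(t) = sup{τ ∈ [t,τ₀] : γ(r) = γ(t) for all r ∈ [t,τ]}. Then for t₁, t₂ ∈ [0,τ₀], l(0,t₁) = l(0,t₂) if and only if [τ₁(t₁), τ₂(t₁)] = [τ₁(t₂), τ₂(t₂)]. -/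
open Set Filter Topology

/-- Arc length of `γ` on `[t₁, t₂]`: the supremum over partitions of `Σᵢ |γ(rᵢ) - γ(rᵢ₋₁)|`. -/
noncomputable def arcLen {n : ℕ} (γ : ℝ → EuclideanSpace ℝ (Fin n)) (t₁ t₂ : ℝ) : ℝ :=
  (eVariationOn γ (Set.Icc t₁ t₂)).toReal

/-- Left endpoint of the maximal constancy interval of `γ` (on `[0, τ₀]`) containing `t`. -/
noncomputable def tau₁ {n : ℕ} (γ : ℝ → EuclideanSpace ℝ (Fin n)) (t : ℝ) : ℝ :=
  sInf {τ ∈ Set.Icc 0 t | ∀ r ∈ Set.Icc τ t, γ r = γ t}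

/-- Right endpoint of the maximal constancy interval of `γ` on `[0, τ₀]` containing `t`. -/
noncomputable def tau₂ {n : ℕ} (γ : ℝ → EuclideanSpace ℝ (Fin n)) (τ₀ t : ℝ) : ℝ :=
  sSup {τ ∈ Set.Icc t τ₀ | ∀ r ∈ Set.Icc t τ, γ r = γ t}

section Aux

variable {n : ℕ} (γ : ℝ → EuclideanSpace ℝ (Fin n))

lemma S1_bddBelow (t : ℝ) : BddBelow {τ ∈ Set.Icc 0 t | ∀ r ∈ Set.Icc τ t, γ r = γ t} :=
  ⟨0, fun τ hτ => hτ.1.1⟩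

lemma S1_mem_self {t : ℝ} (ht : 0 ≤ t) :
    t ∈ {τ ∈ Set.Icc 0 t | ∀ r ∈ Set.Icc τ t, γ r = γ t} :=
  ⟨⟨ht, le_rfl⟩, fun r hr => by rw [le_antisymm hr.2 hr.1]⟩

lemma S2_bddAbove (τ₀ t : ℝ) : BddAbove {τ ∈ Set.Icc t τ₀ | ∀ r ∈ Set.Icc t τ, γ r = γ t} :=
  ⟨τ₀, fun τ hτ => hτ.1.2⟩

lemma S2_mem_self {τ₀ t : ℝ} (ht : t ≤ τ₀) :
    t ∈ {τ ∈ Set.Icc t τ₀ | ∀ r ∈ Set.Icc t τ, γ r = γ t} :=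
  ⟨⟨le_rfl, ht⟩, fun r hr => by rw [le_antisymm hr.2 hr.1]⟩

lemma tau₁_le {t : ℝ} (ht : 0 ≤ t) : tau₁ γ t ≤ t :=
  csInf_le (S1_bddBelow γ t) (S1_mem_self γ ht)

lemma le_tau₂ {τ₀ t : ℝ} (ht : t ≤ τ₀) : t ≤ tau₂ γ τ₀ t :=
  le_csSup (S2_bddAbove γ τ₀ t) (S2_mem_self γ ht)

lemma mem_Icc_tau {τ₀ t : ℝ} (ht : t ∈ Set.Icc 0 τ₀) :
    t ∈ Set.Icc (tau₁ γ t) (tau₂ γ τ₀ t) :=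
  ⟨tau₁_le γ ht.1, le_tau₂ γ ht.2⟩

lemma const_of_tau₁_lt {t r : ℝ} (ht : 0 ≤ t) (h1 : tau₁ γ t < r) (h2 : r ≤ t) : γ r = γ t := by
  obtain ⟨τ, hτ, hτr⟩ := exists_lt_of_csInf_lt ⟨t, S1_mem_self γ ht⟩ h1
  exact hτ.2 r ⟨hτr.le, h2⟩

lemma const_of_lt_tau₂ {τ₀ t r : ℝ} (ht : t ≤ τ₀) (h1 : t ≤ r) (h2 : r < tau₂ γ τ₀ t) :
    γ r = γ t := by
  obtain ⟨τ, hτ, hrτ⟩ := exists_lt_of_lt_csSup ⟨t, S2_mem_self γ ht⟩ h2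
  exact hτ.2 r ⟨h1, hrτ.le⟩

lemma tau₁_congr {t₁ t₂ : ℝ} (h0 : 0 ≤ t₁) (h12 : t₁ ≤ t₂)
    (hc : ∀ r ∈ Set.Icc t₁ t₂, γ r = γ t₁) : tau₁ γ t₁ = tau₁ γ t₂ := by
  have hγ12 : γ t₂ = γ t₁ := hc t₂ ⟨h12, le_rfl⟩
  set S₁ := {τ ∈ Set.Icc 0 t₁ | ∀ r ∈ Set.Icc τ t₁, γ r = γ t₁} with hS₁
  set S₂ := {τ ∈ Set.Icc 0 t₂ | ∀ r ∈ Set.Icc τ t₂, γ r = γ t₂} with hS₂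
  have hsub : S₁ ⊆ S₂ := by
    rintro τ ⟨⟨hτ0, hτt⟩, hτc⟩
    refine ⟨⟨hτ0, hτt.trans h12⟩, fun r hr => ?_⟩
    rcases le_total r t₁ with h | h
    · exact (hτc r ⟨hr.1, h⟩).trans hγ12.symm
    · exact (hc r ⟨h, hr.2⟩).trans hγ12.symm
  refine le_antisymm ?_ (csInf_le_csInf (S1_bddBelow γ t₂) ⟨t₁, S1_mem_self γ h0⟩ hsub)
  refine le_csInf ⟨t₂, S1_mem_self γ (h0.trans h12)⟩ fun τ hτ => ?_
  rcases le_total t₁ τ with h | h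
  · exact (tau₁_le γ h0).trans h
  · refine csInf_le (S1_bddBelow γ t₁) ⟨⟨hτ.1.1, h⟩, fun r hr => ?_⟩
    exact (hτ.2 r ⟨hr.1, hr.2.trans h12⟩).trans hγ12

lemma tau₂_congr {τ₀ t₁ t₂ : ℝ} (h12 : t₁ ≤ t₂) (h2 : t₂ ≤ τ₀)
    (hc : ∀ r ∈ Set.Icc t₁ t₂, γ r = γ t₁) : tau₂ γ τ₀ t₁ = tau₂ γ τ₀ t₂ := by
  have hγ12 : γ t₂ = γ t₁ := hc t₂ ⟨h12, le_rfl⟩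
  set S₁ := {τ ∈ Set.Icc t₁ τ₀ | ∀ r ∈ Set.Icc t₁ τ, γ r = γ t₁} with hS₁
  set S₂ := {τ ∈ Set.Icc t₂ τ₀ | ∀ r ∈ Set.Icc t₂ τ, γ r = γ t₂} with hS₂
  have hsub : S₂ ⊆ S₁ := by
    rintro τ ⟨⟨hτt, hττ⟩, hτc⟩
    refine ⟨⟨h12.trans hτt, hττ⟩, fun r hr => ?_⟩
    rcases le_total r t₂ with h | h
    · exact hc r ⟨hr.1, h⟩
    · exact (hτc r ⟨h, hr.2⟩).trans hγ12
  refine le_antisymm ?_ (csSup_le_csSup (S2_bddAbove γ τ₀ t₁) ⟨t₂, S2_mem_self γ h2⟩ hsub)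
  refine csSup_le ⟨t₁, S2_mem_self γ (h12.trans h2)⟩ fun τ hτ => ?_
  rcases le_total τ t₂ with h | h
  · exact h.trans (le_tau₂ γ h2)
  · refine le_csSup (S2_bddAbove γ τ₀ t₂) ⟨⟨h, hτ.1.2⟩, fun r hr => ?_⟩
    exact (hτ.2 r ⟨h12.trans hr.1, hr.2⟩).trans hγ12.symm

lemma const_of_Icc_eq {τ₀ t₁ t₂ : ℝ} (ht₁ : t₁ ∈ Set.Icc 0 τ₀) (ht₂ : t₂ ∈ Set.Icc 0 τ₀)
    (h12 : t₁ ≤ t₂)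
    (h : Set.Icc (tau₁ γ t₁) (tau₂ γ τ₀ t₁) = Set.Icc (tau₁ γ t₂) (tau₂ γ τ₀ t₂)) :
    ∀ r ∈ Set.Icc t₁ t₂, γ r = γ t₁ := by
  have h2mem : t₂ ∈ Set.Icc (tau₁ γ t₁) (tau₂ γ τ₀ t₁) := h ▸ mem_Icc_tau γ ht₂
  have h1mem : t₁ ∈ Set.Icc (tau₁ γ t₂) (tau₂ γ τ₀ t₂) := h.symm ▸ mem_Icc_tau γ ht₁
  rcases eq_or_lt_of_le h12 with rfl | hlt
  · intro r hr; rw [le_antisymm hr.2 hr.1]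
  have hγ12 : γ t₂ = γ t₁ := by
    set m := (t₁ + t₂) / 2 with hm
    have hm1 : t₁ < m := by simp [hm]; linarith
    have hm2 : m < t₂ := by simp [hm]; linarith
    have e1 : γ m = γ t₁ := const_of_lt_tau₂ γ ht₁.2 hm1.le (hm2.trans_le h2mem.2)
    have e2 : γ m = γ t₂ := const_of_tau₁_lt γ ht₂.1 (h1mem.1.trans_lt hm1) hm2.le
    exact e2.symm.trans e1
  intro r hr
  rcases eq_or_lt_of_le hr.2 with rfl | hrlt
  · exact hγ12
  · exact const_of_lt_tau₂ γ ht₁.2 hr.1 (hrlt.trans_le h2mem.2)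

lemma arcLen_eq_iff_const {n : ℕ} {τ₀ : ℝ} {κ : NNReal} {γ : ℝ → EuclideanSpace ℝ (Fin n)}
    (hγ : LipschitzOnWith κ γ (Set.Icc 0 τ₀)) {t₁ t₂ : ℝ} (ht₁ : t₁ ∈ Set.Icc 0 τ₀)
    (ht₂ : t₂ ∈ Set.Icc 0 τ₀) (h12 : t₁ ≤ t₂) :
    arcLen γ 0 t₁ = arcLen γ 0 t₂ ↔ ∀ r ∈ Set.Icc t₁ t₂, γ r = γ t₁ := by
  have hbv := hγ.locallyBoundedVariationOn
  have hmem0 : (0 : ℝ) ∈ Set.Icc 0 τ₀ := ⟨le_rfl, ht₂.1.trans ht₂.2⟩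
  have fin1 : eVariationOn γ (Set.Icc 0 t₁) ≠ ⊤ := by
    have := hbv 0 t₁ hmem0 ht₁
    rwa [Set.inter_eq_self_of_subset_right (Set.Icc_subset_Icc_right ht₁.2)] at this
  have fin12 : eVariationOn γ (Set.Icc t₁ t₂) ≠ ⊤ := by
    have := hbv t₁ t₂ ht₁ ht₂
    rwa [Set.inter_eq_self_of_subset_right (Set.Icc_subset_Icc ht₁.1 ht₂.2)] at this
  have hadd : eVariationOn γ (Set.Icc 0 t₁) + eVariationOn γ (Set.Icc t₁ t₂)
      = eVariationOn γ (Set.Icc 0 t₂) := by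
    have := eVariationOn.Icc_add_Icc γ (s := Set.Icc 0 τ₀) ht₁.1 h12 ht₁
    rwa [Set.inter_eq_self_of_subset_right (Set.Icc_subset_Icc_right ht₁.2),
      Set.inter_eq_self_of_subset_right (Set.Icc_subset_Icc ht₁.1 ht₂.2),
      Set.inter_eq_self_of_subset_right (Set.Icc_subset_Icc_right ht₂.2)] at this
  have : arcLen γ 0 t₁ = arcLen γ 0 t₂ ↔ eVariationOn γ (Set.Icc t₁ t₂) = 0 := by
    rw [arcLen, arcLen, ← hadd, ENNReal.toReal_add fin1 fin12, left_eq_add,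
      ENNReal.toReal_eq_zero_iff]
    exact ⟨fun h => h.resolve_right fin12, Or.inl⟩
  rw [this, eVariationOn.eq_zero_iff]
  constructor
  · intro h r hr
    have := h r hr t₁ ⟨le_rfl, h12⟩
    rwa [edist_eq_zero] at this
  · intro h x hx y hy
    rw [h x hx, h y hy, edist_self]

end Aux

theorem arcLen_eq_iff_constancy_interval_eq {n : ℕ} (τ₀ : ℝ) (hτ₀ : 0 ≤ τ₀) (κ : NNReal)
    (γ : ℝ → EuclideanSpace ℝ (Fin n)) (hγ : LipschitzOnWith κ γ (Set.Icc 0 τ₀)) :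
    ∀ t₁ ∈ Set.Icc 0 τ₀, ∀ t₂ ∈ Set.Icc 0 τ₀,
      arcLen γ 0 t₁ = arcLen γ 0 t₂ ↔
        Set.Icc (tau₁ γ t₁) (tau₂ γ τ₀ t₁) = Set.Icc (tau₁ γ t₂) (tau₂ γ τ₀ t₂) := by
  intro t₁ ht₁ t₂ ht₂
  have key : ∀ s₁ ∈ Set.Icc 0 τ₀, ∀ s₂ ∈ Set.Icc 0 τ₀, s₁ ≤ s₂ →
      (arcLen γ 0 s₁ = arcLen γ 0 s₂ ↔
        Set.Icc (tau₁ γ s₁) (tau₂ γ τ₀ s₁) = Set.Icc (tau₁ γ s₂) (tau₂ γ τ₀ s₂)) := by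
    intro s₁ hs₁ s₂ hs₂ h12
    rw [arcLen_eq_iff_const hγ hs₁ hs₂ h12]
    constructor
    · intro hc
      rw [tau₁_congr γ hs₁.1 h12 hc, tau₂_congr γ h12 hs₂.2 hc]
    · exact const_of_Icc_eq γ hs₁ hs₂ h12
  rcases le_total t₁ t₂ with h | h
  · exact key t₁ ht₁ t₂ ht₂ h
  · have K := key t₂ ht₂ t₁ ht₁ h
    exact ⟨fun he => (K.mp he.symm).symm, fun he => (K.mpr he.symm).symm⟩
end

section
/- Let γ : [0, τ₀] → ℝⁿ be Lipschitz with arc length function l, and define τ₂(t) = sup{τ ∈ [t,τ₀] : γ(r) = γ(t) for all r ∈ [t,τ]}. If t, tᵢ ∈ [0,τ₀] satisfy l(0,tᵢ) > l(0,t) for all i and l(0,tᵢ) → l(0,t) as i → ∞, then tᵢ > τ₂(t) for all i and tᵢ → τ₂(t). -/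
open Set Filter Topology

theorem tendsto_tau₂_of_arcLen_tendsto {n : ℕ} (τ₀ : ℝ) (hτ₀ : 0 ≤ τ₀) (κ : NNReal)
    (γ : ℝ → EuclideanSpace ℝ (Fin n)) (hγ : LipschitzOnWith κ γ (Set.Icc 0 τ₀))
    (t : ℝ) (ht : t ∈ Set.Icc 0 τ₀) (ti : ℕ → ℝ) (hti : ∀ i, ti i ∈ Set.Icc 0 τ₀)
    (hgt : ∀ i, arcLen γ 0 t < arcLen γ 0 (ti i))
    (hlim : Tendsto (fun i => arcLen γ 0 (ti i)) atTop (nhds (arcLen γ 0 t))) :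
    (∀ i, tau₂ γ τ₀ t < ti i) ∧ Tendsto ti atTop (nhds (tau₂ γ τ₀ t)) := by
  obtain ⟨ht0, htτ⟩ := ht
  set S := {τ ∈ Set.Icc t τ₀ | ∀ r ∈ Set.Icc t τ, γ r = γ t} with hSdef
  have htS : t ∈ S := ⟨⟨le_refl t, htτ⟩, fun r hr => by
    have : r = t := le_antisymm hr.2 hr.1
    rw [this]⟩
  have hbdd : BddAbove S := ⟨τ₀, fun x hx => hx.1.2⟩
  set τ₂ := tau₂ γ τ₀ t with hτ₂def
  have hτ₂_le : τ₂ ≤ τ₀ := csSup_le ⟨t, htS⟩ (fun x hx => hx.1.2)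
  have ht_le : t ≤ τ₂ := le_csSup hbdd htS
  have hτ₂0 : (0:ℝ) ≤ τ₂ := ht0.trans ht_le
  -- γ is constant on [t, τ₂)
  have hconst' : ∀ r ∈ Set.Ico t τ₂, γ r = γ t := by
    intro r hr
    obtain ⟨τ, hτS, hrτ⟩ := exists_lt_of_lt_csSup ⟨t, htS⟩ hr.2
    exact hτS.2 r ⟨hr.1, hrτ.le⟩
  -- γ τ₂ = γ t, by continuity
  have hγτ₂ : γ τ₂ = γ t := by
    rcases eq_or_lt_of_le ht_le with heq | hlt2
    · rw [← heq]
    · have hmem : Set.Ioo t τ₂ ∈ 𝓝[<] τ₂ := Ioo_mem_nhdsLT hlt2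
      have h1 : Tendsto γ (𝓝[<] τ₂) (𝓝 (γ τ₂)) := by
        have hc : ContinuousWithinAt γ (Set.Icc 0 τ₀) τ₂ :=
          hγ.continuousOn.continuousWithinAt ⟨hτ₂0, hτ₂_le⟩
        exact hc.tendsto.mono_left (nhdsWithin_le_of_mem
          (mem_of_superset hmem (fun x hx => ⟨ht0.trans hx.1.le, hx.2.le.trans hτ₂_le⟩)))
      have h2 : Tendsto γ (𝓝[<] τ₂) (𝓝 (γ t)) := by
        refine Tendsto.congr' ?_ (tendsto_const_nhds :
          Tendsto (fun _ : ℝ => γ t) (𝓝[<] τ₂) (𝓝 (γ t)))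
        filter_upwards [hmem] with x hx
        exact (hconst' x ⟨hx.1.le, hx.2⟩).symm
      exact tendsto_nhds_unique h1 h2
  have hconst : ∀ r ∈ Set.Icc t τ₂, γ r = γ t := by
    intro r hr
    rcases eq_or_lt_of_le hr.2 with heq | hlt
    · rw [heq, hγτ₂]
    · exact hconst' r ⟨hr.1, hlt⟩
  -- finiteness of variation
  have hfin : ∀ a b : ℝ, a ∈ Set.Icc 0 τ₀ → b ∈ Set.Icc 0 τ₀ →
      eVariationOn γ (Set.Icc a b) ≠ ⊤ := by
    intro a b ha hb
    have h := hγ.locallyBoundedVariationOn a b ha hb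
    rwa [Set.inter_eq_self_of_subset_right (Set.Icc_subset_Icc ha.1 hb.2)] at h
  have hsplit : ∀ a b c : ℝ, a ≤ b → b ≤ c →
      eVariationOn γ (Set.Icc a b) + eVariationOn γ (Set.Icc b c)
        = eVariationOn γ (Set.Icc a c) := by
    intro a b c hab hbc
    have h := eVariationOn.Icc_add_Icc γ (s := Set.univ) hab hbc (Set.mem_univ b)
    simpa using h
  -- monotonicity of arcLen
  have hmono : ∀ a b : ℝ, a ≤ b → 0 ≤ a → b ∈ Set.Icc 0 τ₀ →
      arcLen γ 0 a ≤ arcLen γ 0 b := by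
    intro a b hab ha hb
    exact ENNReal.toReal_mono (hfin 0 b ⟨le_refl 0, hτ₀⟩ hb)
      (eVariationOn.mono γ (Set.Icc_subset_Icc_right hab))
  -- arcLen γ 0 τ₂ = arcLen γ 0 t
  have heq : arcLen γ 0 τ₂ = arcLen γ 0 t := by
    have hz : eVariationOn γ (Set.Icc t τ₂) = 0 := by
      rw [eVariationOn.eq_zero_iff]
      intro x hx y hy
      rw [hconst x hx, hconst y hy, edist_self]
    unfold arcLen
    rw [← hsplit 0 t τ₂ ht0 ht_le, hz, add_zero]
  -- strict inequality beyond τ₂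
  have hstrict : ∀ s : ℝ, τ₂ < s → s ≤ τ₀ → arcLen γ 0 t < arcLen γ 0 s := by
    intro s hs hsτ
    have hts : t ≤ s := ht_le.trans hs.le
    have hsmem : s ∈ Set.Icc 0 τ₀ := ⟨ht0.trans hts, hsτ⟩
    have hne : eVariationOn γ (Set.Icc t s) ≠ 0 := by
      intro h0
      have hcst : ∀ r ∈ Set.Icc t s, γ r = γ t := by
        intro r hr
        have := (eVariationOn.eq_zero_iff γ).1 h0 r hr t ⟨le_refl t, hts⟩
        exact eq_of_edist_eq_zero this
      have : s ∈ S := ⟨⟨hts, hsτ⟩, hcst⟩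
      exact absurd (le_csSup hbdd this) (not_le.2 hs)
    have hfin' : eVariationOn γ (Set.Icc t s) ≠ ⊤ := hfin t s ⟨ht0, htτ⟩ hsmem
    have hpos : 0 < (eVariationOn γ (Set.Icc t s)).toReal := ENNReal.toReal_pos hne hfin'
    have : arcLen γ 0 s = arcLen γ 0 t + (eVariationOn γ (Set.Icc t s)).toReal := by
      unfold arcLen
      rw [← hsplit 0 t s ht0 hts, ENNReal.toReal_add (hfin 0 t ⟨le_refl 0, hτ₀⟩ ⟨ht0, htτ⟩) hfin']
    linarith
  -- part (a)
  have hgt₂ : ∀ i, τ₂ < ti i := by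
    intro i
    by_contra h
    push_neg at h
    have := hmono (ti i) τ₂ h (hti i).1 ⟨hτ₂0, hτ₂_le⟩
    rw [heq] at this
    exact absurd (hgt i) (not_lt.2 this)
  refine ⟨hgt₂, ?_⟩
  rw [tendsto_order]
  constructor
  · intro a ha
    exact Eventually.of_forall fun i => ha.trans (hgt₂ i)
  · intro a ha
    rcases le_or_gt a τ₀ with haτ | haτ
    · have hstr := hstrict a ha haτ
      filter_upwards [hlim.eventually_lt_const hstr] with i hi
      by_contra h
      push_neg at h
      have := hmono a (ti i) h (hτ₂0.trans ha.le) (hti i)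
      exact absurd hi (not_lt.2 this)
    · exact Eventually.of_forall fun i => lt_of_le_of_lt (hti i).2 haτ
end

section
/- Let γ : [0,τ₀] → ℝⁿ be Lipschitz with arc-length reparameterization γ_l, and f : ℝⁿ → ℝⁿ. Suppose for every t with τ₂(t) < τ₀ both lim_{r→τ₂(t)⁺} f(γ(r)) = f(γ(t)) and lim_{r→τ₂(t)⁺} (γ(r) − γ(t))/|γ(r) − γ(t)| = f(γ(t)) hold. Then the right derivative of γ_l exists at every s ∈ [0, l(0,τ₀)) and equals f(γ_l(s)). -/
open Set Filter Topology RealInnerProductSpace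
open scoped ENNReal NNReal

/-- basic properties of tau₂ -/
lemma tau2_spec {n : ℕ} {τ₀ : ℝ} {γ : ℝ → EuclideanSpace ℝ (Fin n)}
    (hcont : ContinuousOn γ (Set.Icc 0 τ₀)) {t : ℝ} (ht : t ∈ Set.Icc 0 τ₀) :
    t ≤ tau₂ γ τ₀ t ∧ tau₂ γ τ₀ t ≤ τ₀ ∧ ∀ r ∈ Set.Icc t (tau₂ γ τ₀ t), γ r = γ t := by
  set S := {τ ∈ Set.Icc t τ₀ | ∀ r ∈ Set.Icc t τ, γ r = γ t} with hS
  have htS : t ∈ S := ⟨⟨le_refl t, ht.2⟩, fun r hr => by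
    have : r = t := le_antisymm hr.2 hr.1
    rw [this]⟩
  have hbdd : BddAbove S := ⟨τ₀, fun x hx => hx.1.2⟩
  have hle : t ≤ tau₂ γ τ₀ t := le_csSup hbdd htS
  have hle2 : tau₂ γ τ₀ t ≤ τ₀ := csSup_le ⟨t, htS⟩ (fun x hx => hx.1.2)
  refine ⟨hle, hle2, ?_⟩
  have hlt : ∀ r, t ≤ r → r < tau₂ γ τ₀ t → γ r = γ t := by
    intro r hr hr2
    obtain ⟨τ, hτS, hrτ⟩ := exists_lt_of_lt_csSup ⟨t, htS⟩ hr2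
    exact hτS.2 r ⟨hr, hrτ.le⟩
  intro r hr
  rcases lt_or_eq_of_le hr.2 with h | h
  · exact hlt r hr.1 h
  · -- r = tau₂; use continuity
    rcases eq_or_lt_of_le hle with h2 | h2
    · rw [h, ← h2]
    · -- t < tau₂
      set T := tau₂ γ τ₀ t
      have hTmem : T ∈ Set.Icc 0 τ₀ := ⟨le_trans ht.1 hle, hle2⟩
      have hc : ContinuousWithinAt γ (Set.Ioo t T) T :=
        (hcont T hTmem).mono (fun x hx => ⟨le_trans ht.1 hx.1.le, le_trans hx.2.le hle2⟩)
      have hne : (𝓝[Set.Ioo t T] T).NeBot := right_nhdsWithin_Ioo_neBot h2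
      have h1 : Tendsto γ (𝓝[Set.Ioo t T] T) (𝓝 (γ T)) := hc
      have h2' : Tendsto γ (𝓝[Set.Ioo t T] T) (𝓝 (γ t)) := by
        apply Tendsto.congr' _ tendsto_const_nhds
        filter_upwards [eventually_mem_nhdsWithin] with x hx
        exact (hlt x hx.1.le hx.2).symm
      rw [h]
      exact tendsto_nhds_unique h1 h2'


/-- variation bound from Lipschitz -/
lemma evar_le {n : ℕ} {τ₀ : ℝ} {κ : NNReal} {γ : ℝ → EuclideanSpace ℝ (Fin n)}
    (hγ : LipschitzOnWith κ γ (Set.Icc 0 τ₀)) {a b : ℝ} (ha : 0 ≤ a) (hab : a ≤ b)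
    (hb : b ≤ τ₀) : eVariationOn γ (Set.Icc a b) ≤ κ * ENNReal.ofReal (b - a) := by
  have hsub : Set.Icc a b ⊆ Set.Icc 0 τ₀ := Set.Icc_subset_Icc ha hb
  have h1 : eVariationOn (γ ∘ id) (Set.Icc a b) ≤ κ * eVariationOn id (Set.Icc a b) :=
    LipschitzOnWith.comp_eVariationOn_le hγ (fun x hx => hsub hx)
  have h2 : eVariationOn (id : ℝ → ℝ) (Set.Icc a b) ≤ ENNReal.ofReal (b - a) := by
    have := MonotoneOn.eVariationOn_le (f := (id : ℝ → ℝ)) (s := Set.Icc a b)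
      (fun x _ y _ h => h) (Set.left_mem_Icc.2 hab) (Set.right_mem_Icc.2 hab)
    simpa using this
  calc eVariationOn γ (Set.Icc a b) = eVariationOn (γ ∘ id) (Set.Icc a b) := rfl
    _ ≤ κ * eVariationOn id (Set.Icc a b) := h1
    _ ≤ κ * ENNReal.ofReal (b - a) := by exact mul_le_mul_right h2 _


/-- The cone/chord lemma via continuous induction. -/
lemma chord_lemma {n : ℕ} {τ₀ : ℝ} {γ : ℝ → EuclideanSpace ℝ (Fin n)}
    (hcont : ContinuousOn γ (Set.Icc 0 τ₀)) (e : EuclideanSpace ℝ (Fin n))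
    {ε : ℝ} (hε0 : 0 < ε) (hε1 : ε ≤ 1) {a b : ℝ} (ha : 0 ≤ a) (hb : b ≤ τ₀)
    (hfd : ∀ m ∈ Set.Ico a b, tau₂ γ τ₀ m < b →
      ∀ᶠ r in 𝓝[Set.Ioc (tau₂ γ τ₀ m) τ₀] (tau₂ γ τ₀ m),
        (1 - ε) * ‖γ r - γ m‖ ≤ ⟪γ r - γ m, e⟫) :
    ∀ u v, a ≤ u → u ≤ v → v ≤ b → (1 - ε) * ‖γ v - γ u‖ ≤ ⟪γ v - γ u, e⟫ := by
  intro u v hau huv hvb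
  set A : Set ℝ := {w ∈ Set.Icc u b |
    ∀ w' ∈ Set.Icc u w, (1 - ε) * ‖γ w' - γ u‖ ≤ ⟪γ w' - γ u, e⟫} with hA
  have hu0 : 0 ≤ u := le_trans ha hau
  have hub : u ≤ b := le_trans huv hvb
  have huA : u ∈ A := ⟨⟨le_refl u, hub⟩, fun w' hw' => by
    have hw : w' = u := le_antisymm hw'.2 hw'.1
    rw [hw]; simp⟩
  have hbdd : BddAbove A := ⟨b, fun x hx => hx.1.2⟩
  set m := sSup A with hm
  have hum : u ≤ m := le_csSup hbdd huA
  have hmb : m ≤ b := csSup_le ⟨u, huA⟩ (fun x hx => hx.1.2)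
  have hmA : m ∈ A := by
    refine ⟨⟨hum, hmb⟩, fun w hw => ?_⟩
    rcases lt_or_eq_of_le hw.2 with h | h
    · obtain ⟨x, hxA, hwx⟩ := exists_lt_of_lt_csSup ⟨u, huA⟩ h
      exact hxA.2 w ⟨hw.1, hwx.le⟩
    · rcases eq_or_lt_of_le hum with h2 | h2
      · rw [h, ← h2]; simp
      · have hPlt : ∀ x ∈ Set.Ioo u m, (1 - ε) * ‖γ x - γ u‖ ≤ ⟪γ x - γ u, e⟫ := by
          intro x hx
          obtain ⟨y, hyA, hxy⟩ := exists_lt_of_lt_csSup ⟨u, huA⟩ hx.2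
          exact hyA.2 x ⟨hx.1.le, hxy.le⟩
        have hmem : m ∈ Set.Icc 0 τ₀ := ⟨le_trans hu0 hum, le_trans hmb hb⟩
        have hsub : Set.Ioo u m ⊆ Set.Icc 0 τ₀ := fun x hx =>
          ⟨le_trans hu0 hx.1.le, le_trans hx.2.le hmem.2⟩
        have hc : ContinuousWithinAt (fun w => ⟪γ w - γ u, e⟫ - (1 - ε) * ‖γ w - γ u‖)
            (Set.Ioo u m) m := by
          apply ContinuousWithinAt.sub
          · exact ((hcont m hmem).mono hsub |>.sub continuousWithinAt_const).inner
              continuousWithinAt_const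
          · exact continuousWithinAt_const.mul
              ((hcont m hmem).mono hsub |>.sub continuousWithinAt_const).norm
        have hne : (𝓝[Set.Ioo u m] m).NeBot := right_nhdsWithin_Ioo_neBot h2
        have hge : 0 ≤ ⟪γ m - γ u, e⟫ - (1 - ε) * ‖γ m - γ u‖ := by
          apply ge_of_tendsto hc
          filter_upwards [eventually_mem_nhdsWithin] with x hx
          have := hPlt x hx
          linarith
        rw [h]; linarith
  have hmbeq : m = b := by
    by_contra hnem
    have hmlt : m < b := lt_of_le_of_ne hmb hnem
    have hmIcc : m ∈ Set.Icc 0 τ₀ := ⟨le_trans hu0 hum, le_trans hmb hb⟩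
    obtain ⟨hmT, hTτ, hTconst⟩ := tau2_spec hcont hmIcc
    set T := tau₂ γ τ₀ m with hT
    have hPm : (1 - ε) * ‖γ m - γ u‖ ≤ ⟪γ m - γ u, e⟫ := hmA.2 m ⟨hum, le_refl m⟩
    have hPmT : ∀ w ∈ Set.Ioc m T, (1 - ε) * ‖γ w - γ u‖ ≤ ⟪γ w - γ u, e⟫ := by
      intro w hw
      have hww : γ w = γ m := hTconst w ⟨hw.1.le, hw.2⟩
      rw [hww]; exact hPm
    rcases le_or_gt b T with hcb | hcb
    · have hbA : b ∈ A := by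
        refine ⟨⟨hub, le_refl b⟩, fun w hw => ?_⟩
        rcases le_or_gt w m with h | h
        · exact hmA.2 w ⟨hw.1, h⟩
        · exact hPmT w ⟨h, le_trans hw.2 hcb⟩
      exact absurd (le_csSup hbdd hbA) (not_le.2 hmlt)
    · have hev := hfd m ⟨le_trans hau hum, hmlt⟩ hcb
      rw [eventually_nhdsWithin_iff, Metric.eventually_nhds_iff] at hev
      obtain ⟨η, hη, hev⟩ := hev
      set w₀ := min b (T + η / 2) with hw₀
      have hTw₀ : T < w₀ := lt_min hcb (by linarith)
      have hw₀b : w₀ ≤ b := min_le_left _ _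
      have hw₀A : w₀ ∈ A := by
        refine ⟨⟨le_trans hum (le_trans hmT hTw₀.le), hw₀b⟩, fun w hw => ?_⟩
        rcases le_or_gt w m with h | h
        · exact hmA.2 w ⟨hw.1, h⟩
        rcases le_or_gt w T with h2 | h2
        · exact hPmT w ⟨h, h2⟩
        · have hwτ : w ≤ τ₀ := le_trans hw.2 (le_trans hw₀b hb)
          have hdist : dist w T < η := by
            rw [Real.dist_eq, abs_of_pos (by linarith)]
            have : w ≤ T + η / 2 := le_trans hw.2 (min_le_right _ _)
            linarith
          have hineq := hev hdist ⟨h2, hwτ⟩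
          have hsplit : ⟪γ w - γ u, e⟫ = ⟪γ w - γ m, e⟫ + ⟪γ m - γ u, e⟫ := by
            rw [← inner_add_left, sub_add_sub_cancel]
          have htri : ‖γ w - γ u‖ ≤ ‖γ w - γ m‖ + ‖γ m - γ u‖ :=
            norm_sub_le_norm_sub_add_norm_sub (γ w) (γ m) (γ u)
          rw [hsplit]
          nlinarith [norm_nonneg (γ w - γ m), norm_nonneg (γ m - γ u)]
      exact absurd (le_csSup hbdd hw₀A) (not_le.2 (lt_of_le_of_lt hmT hTw₀))
  exact hmA.2 v ⟨huv, by rw [hmbeq]; exact hvb⟩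

lemma variation_le {n : ℕ} {γ : ℝ → EuclideanSpace ℝ (Fin n)} (e : EuclideanSpace ℝ (Fin n))
    {ε : ℝ} (hε1 : ε < 1) {u v : ℝ}
    (hch : ∀ x y, u ≤ x → x ≤ y → y ≤ v → (1 - ε) * ‖γ y - γ x‖ ≤ ⟪γ y - γ x, e⟫) :
    eVariationOn γ (Set.Icc u v) ≤ ENNReal.ofReal ((1 - ε)⁻¹ * ⟪γ v - γ u, e⟫) := by
  have hpos : (0:ℝ) < 1 - ε := by linarith
  apply iSup_le
  rintro ⟨N, w, hw, hws⟩
  have key : ∀ i, edist (γ (w (i + 1))) (γ (w i)) = ENNReal.ofReal ‖γ (w (i+1)) - γ (w i)‖ := by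
    intro i; rw [edist_dist, dist_eq_norm]
  calc ∑ i ∈ Finset.range N, edist (γ (w (i + 1))) (γ (w i))
      = ENNReal.ofReal (∑ i ∈ Finset.range N, ‖γ (w (i+1)) - γ (w i)‖) := by
        rw [ENNReal.ofReal_sum_of_nonneg (fun i _ => norm_nonneg _)]
        exact Finset.sum_congr rfl fun i _ => key i
    _ ≤ ENNReal.ofReal ((1 - ε)⁻¹ * ⟪γ v - γ u, e⟫) := by
        apply ENNReal.ofReal_le_ofReal
        have step : ∀ i, ‖γ (w (i+1)) - γ (w i)‖ ≤ (1 - ε)⁻¹ * ⟪γ (w (i+1)) - γ (w i), e⟫ := by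
          intro i
          have h := hch (w i) (w (i+1)) (hws i).1 (hw (Nat.le_succ i)) (hws (i+1)).2
          rw [le_inv_mul_iff₀ hpos, mul_comm]
          linarith [h]
        calc ∑ i ∈ Finset.range N, ‖γ (w (i+1)) - γ (w i)‖
            ≤ ∑ i ∈ Finset.range N, (1 - ε)⁻¹ * ⟪γ (w (i+1)) - γ (w i), e⟫ :=
              Finset.sum_le_sum fun i _ => step i
          _ = (1 - ε)⁻¹ * ∑ i ∈ Finset.range N, ⟪γ (w (i+1)) - γ (w i), e⟫ := by
              rw [Finset.mul_sum]
          _ = (1 - ε)⁻¹ * (⟪γ (w N), e⟫ - ⟪γ (w 0), e⟫) := by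
              congr 1
              have : ∀ i, ⟪γ (w (i+1)) - γ (w i), e⟫ = ⟪γ (w (i+1)), e⟫ - ⟪γ (w i), e⟫ :=
                fun i => inner_sub_left _ _ _
              simp_rw [this]
              exact Finset.sum_range_sub (fun i => ⟪γ (w i), e⟫) N
          _ ≤ (1 - ε)⁻¹ * ⟪γ v - γ u, e⟫ := by
              have h1 : 0 ≤ ⟪γ v - γ (w N), e⟫ := le_trans
                (by positivity) (hch (w N) v (hws N).1 (hws N).2 (le_refl v))
              have h2 : 0 ≤ ⟪γ (w 0) - γ u, e⟫ := le_trans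
                (by positivity) (hch u (w 0) (le_refl u) (hws 0).1 (hws 0).2)
              have h3 : ⟪γ v - γ u, e⟫ = ⟪γ v - γ (w N), e⟫ + (⟪γ (w N), e⟫ - ⟪γ (w 0), e⟫)
                  + ⟪γ (w 0) - γ u, e⟫ := by
                simp only [inner_sub_left]; ring
              apply mul_le_mul_of_nonneg_left _ (by positivity)
              linarith

set_option maxHeartbeats 2000000 in
theorem right_derivative_of_reparam {n : ℕ} (τ₀ : ℝ) (hτ₀ : 0 ≤ τ₀) (κ : NNReal)
    (γ : ℝ → EuclideanSpace ℝ (Fin n)) (hγ : LipschitzOnWith κ γ (Set.Icc 0 τ₀))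
    (γl : ℝ → EuclideanSpace ℝ (Fin n))
    (hγl : ∀ t ∈ Set.Icc 0 τ₀, γl (arcLen γ 0 t) = γ t)
    (f : EuclideanSpace ℝ (Fin n) → EuclideanSpace ℝ (Fin n))
    (hf : ∀ t ∈ Set.Icc 0 τ₀, tau₂ γ τ₀ t < τ₀ →
      Tendsto (fun r => f (γ r)) (nhdsWithin (tau₂ γ τ₀ t) (Set.Ioc (tau₂ γ τ₀ t) τ₀))
        (nhds (f (γ t))))
    (hdir : ∀ t ∈ Set.Icc 0 τ₀, tau₂ γ τ₀ t < τ₀ →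
      Tendsto (fun r => ‖γ r - γ t‖⁻¹ • (γ r - γ t))
        (nhdsWithin (tau₂ γ τ₀ t) (Set.Ioc (tau₂ γ τ₀ t) τ₀)) (nhds (f (γ t)))) :
    ∀ s ∈ Set.Ico 0 (arcLen γ 0 τ₀),
      Tendsto (fun r => (r - s)⁻¹ • (γl r - γl s))
        (nhdsWithin s (Set.Ioc s (arcLen γ 0 τ₀))) (nhds (f (γl s))) := by
  intro s hs
  obtain ⟨hs0, hsL⟩ := hs
  have hcont : ContinuousOn γ (Set.Icc 0 τ₀) := hγ.continuousOn
  -- basic facts about ℓ = arcLen γ 0 ·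
  have hfin : ∀ a b : ℝ, 0 ≤ a → b ≤ τ₀ → eVariationOn γ (Set.Icc a b) ≠ ⊤ := by
    intro a b ha hb
    rcases le_or_gt a b with h | h
    · exact ne_top_of_le_ne_top (ENNReal.mul_ne_top ENNReal.coe_ne_top ENNReal.ofReal_ne_top)
        (evar_le hγ ha h hb)
    · rw [Set.Icc_eq_empty (not_le.2 h), eVariationOn.subsingleton γ Set.subsingleton_empty]
      exact ENNReal.zero_ne_top
  have harc : ∀ t₁ t₂ : ℝ, 0 ≤ t₁ → t₁ ≤ t₂ → t₂ ≤ τ₀ →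
      arcLen γ 0 t₂ = arcLen γ 0 t₁ + arcLen γ t₁ t₂ := by
    intro t₁ t₂ h0 h12 h2
    have h := eVariationOn.Icc_add_Icc γ (s := Set.univ) h0 h12 (Set.mem_univ t₁)
    simp only [Set.univ_inter] at h
    rw [arcLen, arcLen, arcLen, ← h,
      ENNReal.toReal_add (hfin _ _ le_rfl (h12.trans h2)) (hfin _ _ h0 h2)]
  have hbound : ∀ t₁ t₂ : ℝ, 0 ≤ t₁ → t₁ ≤ t₂ → t₂ ≤ τ₀ → arcLen γ t₁ t₂ ≤ κ * (t₂ - t₁) := by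
    intro t₁ t₂ h0 h12 h2
    rw [arcLen]
    calc (eVariationOn γ (Set.Icc t₁ t₂)).toReal
        ≤ ((κ : ℝ≥0∞) * ENNReal.ofReal (t₂ - t₁)).toReal :=
          ENNReal.toReal_mono (ENNReal.mul_ne_top ENNReal.coe_ne_top ENNReal.ofReal_ne_top)
            (evar_le hγ h0 h12 h2)
      _ = κ * (t₂ - t₁) := by
          rw [ENNReal.toReal_mul, ENNReal.coe_toReal, ENNReal.toReal_ofReal (by linarith)]
  have harcnn : ∀ t₁ t₂ : ℝ, 0 ≤ arcLen γ t₁ t₂ := fun _ _ => ENNReal.toReal_nonneg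
  have hmono : ∀ t₁ t₂ : ℝ, 0 ≤ t₁ → t₁ ≤ t₂ → t₂ ≤ τ₀ → arcLen γ 0 t₁ ≤ arcLen γ 0 t₂ := by
    intro t₁ t₂ h0 h12 h2
    rw [harc t₁ t₂ h0 h12 h2]
    linarith [harcnn t₁ t₂]
  have hℓcont : ContinuousOn (fun t => arcLen γ 0 t) (Set.Icc 0 τ₀) := by
    apply LipschitzOnWith.continuousOn (K := κ)
    apply LipschitzOnWith.of_dist_le_mul
    intro x hx y hy
    rcases le_total y x with h | h
    · rw [Real.dist_eq, Real.dist_eq, abs_of_nonneg (by linarith [hmono y x hy.1 h hx.2]),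
        abs_of_nonneg (by linarith)]
      have h1 := harc y x hy.1 h hx.2
      have h2 := hbound y x hy.1 h hx.2
      linarith
    · rw [Real.dist_eq, Real.dist_eq, abs_of_nonpos (by linarith [hmono x y hx.1 h hy.2]),
        abs_of_nonpos (by linarith)]
      have h1 := harc x y hx.1 h hy.2
      have h2 := hbound x y hx.1 h hy.2
      linarith
  have hℓ0 : arcLen γ 0 0 = 0 := by
    rw [arcLen, Set.Icc_self, eVariationOn.subsingleton γ Set.subsingleton_singleton]
    rfl
  have hIVT : ∀ a b : ℝ, 0 ≤ a → a ≤ b → b ≤ τ₀ → ∀ y ∈ Set.Icc (arcLen γ 0 a) (arcLen γ 0 b),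
      ∃ t ∈ Set.Icc a b, arcLen γ 0 t = y := by
    intro a b ha hab hb y hy
    have := intermediate_value_Icc hab (hℓcont.mono (Set.Icc_subset_Icc ha hb)) hy
    obtain ⟨t, ht, h⟩ := this
    exact ⟨t, ht, h⟩
  -- the set K and t* = sSup K
  set K : Set ℝ := {t ∈ Set.Icc 0 τ₀ | arcLen γ 0 t = s} with hK
  have hKcl : IsClosed K := by
    have heq : K = Set.Icc 0 τ₀ ∩ (fun t => arcLen γ 0 t) ⁻¹' {s} := by
      ext x; simp [hK]
    rw [heq]
    exact hℓcont.preimage_isClosed_of_isClosed isClosed_Icc isClosed_singleton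
  have hKne : K.Nonempty := by
    obtain ⟨t, ht, h⟩ := hIVT 0 τ₀ le_rfl hτ₀ le_rfl s ⟨by rw [hℓ0]; exact hs0, hsL.le⟩
    exact ⟨t, ht, h⟩
  have hKcomp : IsCompact K := isCompact_Icc.of_isClosed_subset hKcl (fun x hx => hx.1)
  set tstar := sSup K with htstar
  have htK : tstar ∈ K := hKcomp.sSup_mem hKne
  have hts : arcLen γ 0 tstar = s := htK.2
  have htIcc : tstar ∈ Set.Icc 0 τ₀ := htK.1
  have htlt : tstar < τ₀ := by
    rcases lt_or_eq_of_le htIcc.2 with h | h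
    · exact h
    · exfalso; rw [h] at hts; rw [hts] at hsL; exact lt_irrefl s hsL
  have hKbdd : BddAbove K := ⟨τ₀, fun x hx => hx.1.2⟩
  obtain ⟨hτ1, hτ2, hτ3⟩ := tau2_spec hcont htIcc
  have htau : tau₂ γ τ₀ tstar = tstar := by
    refine le_antisymm ?_ hτ1
    have hTK : tau₂ γ τ₀ tstar ∈ K := by
      refine ⟨⟨le_trans htIcc.1 hτ1, hτ2⟩, ?_⟩
      have hz : eVariationOn γ (Set.Icc tstar (tau₂ γ τ₀ tstar)) = 0 := by
        apply eVariationOn.constant_on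
        rintro x ⟨x', hx', rfl⟩ y ⟨y', hy', rfl⟩
        rw [hτ3 x' hx', hτ3 y' hy']
      rw [harc tstar _ htIcc.1 hτ1 hτ2, hts, arcLen, hz]
      simp
    exact le_csSup hKbdd hTK
  -- limits at tstar
  set e := f (γ tstar) with he
  have hγls : γl s = γ tstar := by rw [← hts]; exact hγl tstar htIcc
  haveI hNB : (𝓝[Set.Ioc tstar τ₀] tstar).NeBot := left_nhdsWithin_Ioc_neBot htlt
  have hfe : Tendsto (fun r => f (γ r)) (𝓝[Set.Ioc tstar τ₀] tstar) (𝓝 e) := by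
    have := hf tstar htIcc (by rw [htau]; exact htlt)
    rwa [htau] at this
  have hde : Tendsto (fun r => ‖γ r - γ tstar‖⁻¹ • (γ r - γ tstar))
      (𝓝[Set.Ioc tstar τ₀] tstar) (𝓝 e) := by
    have := hdir tstar htIcc (by rw [htau]; exact htlt)
    rwa [htau] at this
  have hne : ∀ᶠ r in 𝓝[Set.Ioc tstar τ₀] tstar, γ r ≠ γ tstar := by
    by_contra hcon
    have hfreq : ∃ᶠ r in 𝓝[Set.Ioc tstar τ₀] tstar, γ r = γ tstar := by
      rw [Filter.not_eventually] at hcon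
      exact hcon.mono (fun r hr => not_not.mp hr)
    have he0 : e = 0 := by
      have hmem : e ∈ closure ({0} : Set (EuclideanSpace ℝ (Fin n))) := by
        apply mem_closure_of_frequently_of_tendsto _ hde
        apply hfreq.mono
        intro r hr
        simp [hr]
      simpa using hmem
    have hsmall : ∀ᶠ r in 𝓝[Set.Ioc tstar τ₀] tstar, γ r = γ tstar := by
      have h1 : ∀ᶠ r in 𝓝[Set.Ioc tstar τ₀] tstar,
          dist (‖γ r - γ tstar‖⁻¹ • (γ r - γ tstar)) e < 1/2 :=
        Metric.tendsto_nhds.mp hde (1/2) (by norm_num)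
      apply h1.mono
      intro r hr
      by_contra hrne
      have hd0 : γ r - γ tstar ≠ 0 := sub_ne_zero.2 hrne
      have : ‖‖γ r - γ tstar‖⁻¹ • (γ r - γ tstar)‖ = 1 := by
        rw [norm_smul, norm_inv, norm_norm, inv_mul_cancel₀ (norm_ne_zero_iff.2 hd0)]
      rw [he0, dist_zero_right, this] at hr
      norm_num at hr
    rw [eventually_nhdsWithin_iff, Metric.eventually_nhds_iff] at hsmall
    obtain ⟨η, hη, hsm⟩ := hsmall
    set c := min τ₀ (tstar + η / 2) with hc
    have htc : tstar < c := lt_min htlt (by linarith)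
    have hcK : c ∈ {τ ∈ Set.Icc tstar τ₀ | ∀ r ∈ Set.Icc tstar τ, γ r = γ tstar} := by
      refine ⟨⟨htc.le, min_le_left _ _⟩, fun r hr => ?_⟩
      rcases eq_or_lt_of_le hr.1 with h | h
      · rw [← h]
      · apply hsm _ ⟨h, le_trans hr.2 (min_le_left _ _)⟩
        rw [Real.dist_eq, abs_of_pos (by linarith)]
        have : r ≤ tstar + η / 2 := le_trans hr.2 (min_le_right _ _)
        linarith
    have : c ≤ tau₂ γ τ₀ tstar :=
      le_csSup ⟨τ₀, fun x hx => hx.1.2⟩ hcK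
    rw [htau] at this
    linarith
  have henorm : ‖e‖ = 1 := by
    have h1 : ∀ᶠ r in 𝓝[Set.Ioc tstar τ₀] tstar,
        ‖‖γ r - γ tstar‖⁻¹ • (γ r - γ tstar)‖ = 1 := by
      apply hne.mono
      intro r hr
      have hd0 : γ r - γ tstar ≠ 0 := sub_ne_zero.2 hr
      rw [norm_smul, norm_inv, norm_norm, inv_mul_cancel₀ (norm_ne_zero_iff.2 hd0)]
    have h2 : Tendsto (fun r => ‖‖γ r - γ tstar‖⁻¹ • (γ r - γ tstar)‖)
        (𝓝[Set.Ioc tstar τ₀] tstar) (𝓝 ‖e‖) := hde.norm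
    have h3 : Tendsto (fun _ : ℝ => (1:ℝ)) (𝓝[Set.Ioc tstar τ₀] tstar) (𝓝 ‖e‖) :=
      h2.congr' (h1.mono fun r hr => hr)
    exact tendsto_nhds_unique h3 tendsto_const_nhds
  -- main estimate
  rw [Metric.tendsto_nhds]
  intro ε' hε'
  set ε := min (ε' / 4) (1 / 2) with hε
  have hε0 : 0 < ε := lt_min (by linarith) (by norm_num)
  have hεhalf : ε ≤ 1 / 2 := min_le_right _ _
  have hε1 : ε < 1 := by linarith
  have hεε' : ε ≤ ε' / 4 := min_le_left _ _
  have hpos : (0:ℝ) < 1 - ε := by linarith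
  -- choose b using hf (right continuity of f ∘ γ at tstar)
  have hf2 : ∀ᶠ t in 𝓝[Set.Ioc tstar τ₀] tstar, dist (f (γ t)) e < ε / 2 :=
    Metric.tendsto_nhds.mp hfe (ε / 2) (by positivity)
  rw [eventually_nhdsWithin_iff, Metric.eventually_nhds_iff] at hf2
  obtain ⟨δ₁, hδ₁, hf2⟩ := hf2
  set b := min (tstar + δ₁ / 2) τ₀ with hb
  have htb : tstar < b := lt_min (by linarith) htlt
  have hbτ : b ≤ τ₀ := min_le_right _ _
  -- hypothesis for the chord lemma
  have hfd : ∀ m ∈ Set.Ico tstar b, tau₂ γ τ₀ m < b →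
      ∀ᶠ r in 𝓝[Set.Ioc (tau₂ γ τ₀ m) τ₀] (tau₂ γ τ₀ m),
        (1 - ε) * ‖γ r - γ m‖ ≤ ⟪γ r - γ m, e⟫ := by
    intro m hm hmT
    have hmIcc : m ∈ Set.Icc 0 τ₀ := ⟨le_trans htIcc.1 hm.1, le_trans hm.2.le hbτ⟩
    have hfm : ‖f (γ m) - e‖ ≤ ε / 2 := by
      rcases eq_or_lt_of_le hm.1 with h | h
      · rw [← h, ← he]
        simp
        positivity
      · have key := hf2 (y := m) ?_ ⟨h, hmIcc.2⟩
        · rw [dist_eq_norm] at key; linarith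
        · rw [Real.dist_eq, abs_of_pos (by linarith)]
          have : m < tstar + δ₁ / 2 := lt_of_lt_of_le hm.2 (min_le_left _ _)
          linarith
    have hdm := hdir m hmIcc (lt_of_lt_of_le hmT hbτ)
    have hdm2 : ∀ᶠ r in 𝓝[Set.Ioc (tau₂ γ τ₀ m) τ₀] (tau₂ γ τ₀ m),
        dist (‖γ r - γ m‖⁻¹ • (γ r - γ m)) (f (γ m)) < ε / 2 :=
      Metric.tendsto_nhds.mp hdm (ε / 2) (by positivity)
    apply hdm2.mono
    intro r hr
    by_cases hd : γ r - γ m = 0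
    · rw [hd]; simp
    · have hdn : 0 < ‖γ r - γ m‖ := norm_pos_iff.2 hd
      have hdir_e : ‖‖γ r - γ m‖⁻¹ • (γ r - γ m) - e‖ < ε := by
        rw [dist_eq_norm] at hr
        calc ‖‖γ r - γ m‖⁻¹ • (γ r - γ m) - e‖
            ≤ ‖‖γ r - γ m‖⁻¹ • (γ r - γ m) - f (γ m)‖ + ‖f (γ m) - e‖ :=
              norm_sub_le_norm_sub_add_norm_sub _ _ _
          _ < ε / 2 + ε / 2 := add_lt_add_of_lt_of_le hr hfm
          _ = ε := by ring
      have hinner : 1 - ε ≤ ⟪‖γ r - γ m‖⁻¹ • (γ r - γ m), e⟫ := by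
        have hee : ⟪e, e⟫ = 1 := by
          rw [real_inner_self_eq_norm_sq, henorm]
          norm_num
        have hsplit : ⟪‖γ r - γ m‖⁻¹ • (γ r - γ m), e⟫
            = ⟪e, e⟫ + ⟪‖γ r - γ m‖⁻¹ • (γ r - γ m) - e, e⟫ := by
          rw [← inner_add_left, add_sub_cancel]
        have hcs := abs_real_inner_le_norm (‖γ r - γ m‖⁻¹ • (γ r - γ m) - e) e
        rw [henorm, mul_one] at hcs
        have habs := abs_le.mp hcs
        rw [hsplit, hee]
        linarith [hdir_e.le, habs.1]
      have hexpand : ⟪γ r - γ m, e⟫ = ‖γ r - γ m‖ * ⟪‖γ r - γ m‖⁻¹ • (γ r - γ m), e⟫ := by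
        rw [real_inner_smul_left]
        field_simp
      rw [hexpand]
      nlinarith [hdn]
  have hch := chord_lemma hcont e hε0 (by linarith) htIcc.1 hbτ hfd
  -- the inverse parameterization Tm
  set Tm : ℝ → ℝ := fun r => sInf {t ∈ Set.Icc tstar τ₀ | arcLen γ 0 t = r} with hTm
  have hTspec : ∀ r ∈ Set.Ioc s (arcLen γ 0 τ₀),
      Tm r ∈ Set.Icc tstar τ₀ ∧ arcLen γ 0 (Tm r) = r ∧ tstar < Tm r ∧
        ∀ t ∈ Set.Icc tstar τ₀, arcLen γ 0 t = r → Tm r ≤ t := by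
    intro r hr
    have hKrcl : IsClosed {t ∈ Set.Icc tstar τ₀ | arcLen γ 0 t = r} := by
      have heq : {t ∈ Set.Icc tstar τ₀ | arcLen γ 0 t = r}
          = Set.Icc tstar τ₀ ∩ (fun t => arcLen γ 0 t) ⁻¹' {r} := by
        ext x; simp
      rw [heq]
      exact (hℓcont.mono (Set.Icc_subset_Icc htIcc.1 le_rfl)).preimage_isClosed_of_isClosed
        isClosed_Icc isClosed_singleton
    have hKrne : Set.Nonempty {t ∈ Set.Icc tstar τ₀ | arcLen γ 0 t = r} := by
      obtain ⟨t, ht, h⟩ := hIVT tstar τ₀ htIcc.1 htIcc.2 le_rfl r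
        ⟨by rw [hts]; exact hr.1.le, hr.2⟩
      exact ⟨t, ht, h⟩
    have hKrcomp : IsCompact {t ∈ Set.Icc tstar τ₀ | arcLen γ 0 t = r} :=
      isCompact_Icc.of_isClosed_subset hKrcl (fun x hx => hx.1)
    have hmem : Tm r ∈ {t ∈ Set.Icc tstar τ₀ | arcLen γ 0 t = r} := hKrcomp.sInf_mem hKrne
    refine ⟨hmem.1, hmem.2, ?_, fun t ht hℓt => csInf_le ⟨tstar, fun x hx => hx.1.1⟩ ⟨ht, hℓt⟩⟩
    rcases eq_or_lt_of_le hmem.1.1 with h | h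
    · exfalso
      have hmm := hmem.2
      rw [← h, hts] at hmm
      rw [← hmm] at hr
      exact lt_irrefl s hr.1
    · exact h
  have htto : Tendsto Tm (𝓝[Set.Ioc s (arcLen γ 0 τ₀)] s) (𝓝[Set.Ioc tstar τ₀] tstar) := by
    rw [tendsto_nhdsWithin_iff]
    constructor
    · rw [Metric.tendsto_nhds]
      intro ρ hρ
      set ε₂ := min (ρ / 2) ((τ₀ - tstar) / 2) with hε₂
      have hε₂0 : 0 < ε₂ := lt_min (by linarith) (by linarith)
      have hε₂τ : tstar + ε₂ ≤ τ₀ := by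
        have : ε₂ ≤ (τ₀ - tstar) / 2 := min_le_right _ _
        linarith
      have hs2 : s < arcLen γ 0 (tstar + ε₂) := by
        have hle2 : s ≤ arcLen γ 0 (tstar + ε₂) := by
          rw [← hts]
          exact hmono tstar (tstar + ε₂) htIcc.1 (by linarith) hε₂τ
        rcases lt_or_eq_of_le hle2 with h | h
        · exact h
        · exfalso
          have hmemK : tstar + ε₂ ∈ K := ⟨⟨by linarith [htIcc.1], hε₂τ⟩, h.symm⟩
          have := le_csSup hKbdd hmemK
          linarith
      filter_upwards [eventually_mem_nhdsWithin,
        eventually_nhdsWithin_of_eventually_nhds (eventually_le_nhds hs2)] with r hrIoc hrle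
      obtain ⟨hT1, hT2, hT3, hT4⟩ := hTspec r hrIoc
      obtain ⟨t, ht, hℓt⟩ := hIVT tstar (tstar + ε₂) htIcc.1 (by linarith) hε₂τ r
        ⟨by rw [hts]; exact hrIoc.1.le, hrle⟩
      have hTle : Tm r ≤ t := hT4 t ⟨ht.1, le_trans ht.2 hε₂τ⟩ hℓt
      rw [Real.dist_eq, abs_of_pos (by linarith)]
      have hh1 : ε₂ ≤ ρ / 2 := min_le_left _ _
      have hh2 : t ≤ tstar + ε₂ := ht.2
      linarith
    · filter_upwards [eventually_mem_nhdsWithin] with r hr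
      exact ⟨(hTspec r hr).2.2.1, (hTspec r hr).1.2⟩
  -- combine eventual conditions
  have hev1 : ∀ᶠ t in 𝓝[Set.Ioc tstar τ₀] tstar, γ t ≠ γ tstar ∧
      dist (‖γ t - γ tstar‖⁻¹ • (γ t - γ tstar)) e < ε ∧ t ≤ b := by
    filter_upwards [hne, Metric.tendsto_nhds.mp hde ε hε0,
      eventually_nhdsWithin_of_eventually_nhds (eventually_le_nhds htb)] with t h1 h2 h3
    exact ⟨h1, h2, h3⟩
  have hev2 := htto.eventually hev1
  filter_upwards [hev2, eventually_mem_nhdsWithin] with r hr hrIoc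
  obtain ⟨hγne, hdir_r, hTb⟩ := hr
  obtain ⟨hTIcc, hℓT, hTgt, _⟩ := hTspec r hrIoc
  have htIcc0 : Tm r ∈ Set.Icc 0 τ₀ := ⟨le_trans htIcc.1 hTIcc.1, hTIcc.2⟩
  have hγlr : γl r = γ (Tm r) := by
    have := hγl (Tm r) htIcc0
    rwa [hℓT] at this
  have hd0 : γ (Tm r) - γ tstar ≠ 0 := sub_ne_zero.2 hγne
  have hdn : 0 < ‖γ (Tm r) - γ tstar‖ := norm_pos_iff.2 hd0
  have hrs : r - s = arcLen γ tstar (Tm r) := by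
    have := harc tstar (Tm r) htIcc.1 hTIcc.1 hTIcc.2
    rw [hℓT, hts] at this
    linarith
  have hA0 : 0 < arcLen γ tstar (Tm r) := by rw [← hrs]; linarith [hrIoc.1]
  -- chord ≤ arc
  have hcA : ‖γ (Tm r) - γ tstar‖ ≤ arcLen γ tstar (Tm r) := by
    have h1 := eVariationOn.edist_le γ (Set.left_mem_Icc.2 hTIcc.1)
      (Set.right_mem_Icc.2 hTIcc.1)
    have h2 : dist (γ tstar) (γ (Tm r)) ≤ arcLen γ tstar (Tm r) := by
      rw [arcLen, ← ENNReal.toReal_ofReal dist_nonneg, ← edist_dist]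
      exact ENNReal.toReal_mono (hfin _ _ htIcc.1 htIcc0.2) h1
    rw [dist_eq_norm, norm_sub_rev] at h2
    exact h2
  -- arc ≤ (1-ε)⁻¹ ⟪d, e⟫
  have hchr : ∀ x y, tstar ≤ x → x ≤ y → y ≤ Tm r →
      (1 - ε) * ‖γ y - γ x‖ ≤ ⟪γ y - γ x, e⟫ :=
    fun x y hx hxy hyt => hch x y hx hxy (le_trans hyt hTb)
  have hinner0 : 0 ≤ ⟪γ (Tm r) - γ tstar, e⟫ :=
    le_trans (by positivity) (hchr tstar (Tm r) le_rfl hTIcc.1 le_rfl)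
  have hvar := variation_le e hε1 hchr
  have hAle : arcLen γ tstar (Tm r) ≤ (1 - ε)⁻¹ * ⟪γ (Tm r) - γ tstar, e⟫ := by
    rw [arcLen]
    calc (eVariationOn γ (Set.Icc tstar (Tm r))).toReal
        ≤ (ENNReal.ofReal ((1 - ε)⁻¹ * ⟪γ (Tm r) - γ tstar, e⟫)).toReal :=
          ENNReal.toReal_mono ENNReal.ofReal_ne_top hvar
      _ = (1 - ε)⁻¹ * ⟪γ (Tm r) - γ tstar, e⟫ :=
          ENNReal.toReal_ofReal (by positivity)
  have hCS : ⟪γ (Tm r) - γ tstar, e⟫ ≤ ‖γ (Tm r) - γ tstar‖ := by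
    have := real_inner_le_norm (γ (Tm r) - γ tstar) e
    rwa [henorm, mul_one] at this
  have hAd : (1 - ε) * arcLen γ tstar (Tm r) ≤ ‖γ (Tm r) - γ tstar‖ := by
    have h1 := mul_le_mul_of_nonneg_left hAle hpos.le
    rw [← mul_assoc, mul_inv_cancel₀ hpos.ne', one_mul] at h1
    linarith
  -- final computation
  have hγls' : f (γl s) = e := by rw [hγls]
  rw [hγls', dist_eq_norm, hγlr, hγls, hrs]
  have hsplit2 : ‖(arcLen γ tstar (Tm r))⁻¹ • (γ (Tm r) - γ tstar) - e‖
      ≤ ‖((arcLen γ tstar (Tm r))⁻¹ - ‖γ (Tm r) - γ tstar‖⁻¹) • (γ (Tm r) - γ tstar)‖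
        + ‖‖γ (Tm r) - γ tstar‖⁻¹ • (γ (Tm r) - γ tstar) - e‖ := by
    have : (arcLen γ tstar (Tm r))⁻¹ • (γ (Tm r) - γ tstar) - e
        = ((arcLen γ tstar (Tm r))⁻¹ - ‖γ (Tm r) - γ tstar‖⁻¹) • (γ (Tm r) - γ tstar)
          + (‖γ (Tm r) - γ tstar‖⁻¹ • (γ (Tm r) - γ tstar) - e) := by
      rw [sub_smul]
      abel
    rw [this]
    exact norm_add_le _ _
  have hfirst : ‖((arcLen γ tstar (Tm r))⁻¹ - ‖γ (Tm r) - γ tstar‖⁻¹) •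
      (γ (Tm r) - γ tstar)‖ ≤ ε := by
    rw [norm_smul, Real.norm_eq_abs]
    set A := arcLen γ tstar (Tm r) with hA
    set D := ‖γ (Tm r) - γ tstar‖ with hD
    have hinvle : A⁻¹ ≤ D⁻¹ := inv_anti₀ hdn hcA
    rw [abs_of_nonpos (by linarith)]
    have he1 : D⁻¹ * D = 1 := inv_mul_cancel₀ hdn.ne'
    have he2 : A⁻¹ * A = 1 := inv_mul_cancel₀ hA0.ne'
    have he3 : (1 - ε) ≤ A⁻¹ * D := by
      have h4 := mul_le_mul_of_nonneg_left hAd (inv_nonneg.mpr hA0.le)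
      have h5 : A⁻¹ * ((1 - ε) * A) = (1 - ε) * (A⁻¹ * A) := by ring
      rw [h5, he2, mul_one] at h4
      exact h4
    have hexp : -(A⁻¹ - D⁻¹) * D = D⁻¹ * D - A⁻¹ * D := by ring
    rw [hexp, he1]
    linarith
  have hsecond : ‖‖γ (Tm r) - γ tstar‖⁻¹ • (γ (Tm r) - γ tstar) - e‖ < ε := by
    rw [dist_eq_norm] at hdir_r
    exact hdir_r
  calc ‖(arcLen γ tstar (Tm r))⁻¹ • (γ (Tm r) - γ tstar) - e‖
      ≤ _ + _ := hsplit2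
    _ < ε + ε := add_lt_add_of_le_of_lt hfirst hsecond
    _ ≤ ε' / 4 + ε' / 4 := by linarith
    _ < ε' := by linarith
end

section
/- Let a > 0, 0 < b₁ ≤ b₂ < ∞, and f : [0,a] → [b₁,b₂] be right-continuous. Then there exists a Lipschitz function x : [0, a/b₂] → [0,a] with x(0) = 0 such that the right derivative ẋ⁺(t) exists and equals f(x(t)) for every t ∈ [0, a/b₂). -/
open Set Filter Topology MeasureTheory

lemma meas_aux (a : ℝ) (ha : 0 < a) (f : ℝ → ℝ)
    (hrc : ∀ y ∈ Set.Ico 0 a, Tendsto f (nhdsWithin y (Set.Ioc y a)) (nhds (f y))) :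
    AEMeasurable f (volume.restrict (Set.Icc 0 a)) := by
  set g : ℕ → ℝ → ℝ := fun n y => f (((⌊(2:ℝ)^n * y⌋ : ℤ) + 1) / (2:ℝ)^n) with hg
  have hgm : ∀ n, Measurable (g n) := by
    intro n
    exact (measurable_of_countable (fun k : ℤ => f (((k:ℝ) + 1) / (2:ℝ)^n))).comp
      (measurable_const.mul measurable_id).floor
  have htend : ∀ y ∈ Set.Ico 0 a, Tendsto (fun n => g n y) atTop (nhds (f y)) := by
    intro y hy
    set d : ℕ → ℝ := fun n => ((⌊(2:ℝ)^n * y⌋ : ℤ) + 1 : ℝ) / (2:ℝ)^n with hdd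
    have hpow : ∀ n : ℕ, (0:ℝ) < 2^n := fun n => pow_pos (by norm_num) n
    have hdgt : ∀ n, y < d n := by
      intro n
      rw [hdd, lt_div_iff₀ (hpow n)]
      have := Int.lt_floor_add_one ((2:ℝ)^n * y)
      push_cast at this ⊢
      linarith
    have hdle : ∀ n, d n ≤ y + ((2:ℝ)^n)⁻¹ := by
      intro n
      rw [hdd, div_le_iff₀ (hpow n)]
      have := Int.floor_le ((2:ℝ)^n * y)
      have h2 : (y + ((2:ℝ)^n)⁻¹) * 2^n = 2^n * y + 1 := by
        field_simp
      push_cast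
      linarith
    have hinv : Tendsto (fun n : ℕ => ((2:ℝ)^n)⁻¹) atTop (nhds 0) :=
      tendsto_inv_atTop_zero.comp (tendsto_pow_atTop_atTop_of_one_lt (by norm_num : (1:ℝ) < 2))
    have hd : Tendsto d atTop (nhdsWithin y (Set.Ioc y a)) := by
      apply tendsto_nhdsWithin_of_tendsto_nhds_of_eventually_within
      · have h1 : Tendsto (fun n : ℕ => y + ((2:ℝ)^n)⁻¹) atTop (nhds y) := by
          simpa using tendsto_const_nhds.add hinv
        exact tendsto_of_tendsto_of_tendsto_of_le_of_le tendsto_const_nhds h1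
          (fun n => (hdgt n).le) hdle
      · have hev : ∀ᶠ n : ℕ in atTop, ((2:ℝ)^n)⁻¹ ≤ a - y :=
          hinv.eventually_le_const (show (0:ℝ) < a - y by linarith [hy.2])
        exact hev.mono fun n h => ⟨hdgt n, le_trans (hdle n) (by linarith)⟩
    exact (hrc y hy).comp hd
  have : AEMeasurable f (volume.restrict (Set.Ico 0 a)) := by
    apply aemeasurable_of_tendsto_metrizable_ae' (fun n => (hgm n).aemeasurable)
    filter_upwards [ae_restrict_mem measurableSet_Ico] with y hy using htend y hy
  rwa [Measure.restrict_congr_set Ico_ae_eq_Icc] at this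

theorem exists_solution_right_continuous_ode (a b₁ b₂ : ℝ) (ha : 0 < a)
    (hb₁ : 0 < b₁) (hb : b₁ ≤ b₂) (f : ℝ → ℝ)
    (hrange : ∀ y ∈ Set.Icc 0 a, f y ∈ Set.Icc b₁ b₂)
    (hrc : ∀ y ∈ Set.Ico 0 a, Tendsto f (nhdsWithin y (Set.Ioc y a)) (nhds (f y))) :
    ∃ x : ℝ → ℝ,
      LipschitzOnWith (Real.toNNReal b₂) x (Set.Icc 0 (a / b₂)) ∧
      x 0 = 0 ∧
      (∀ t ∈ Set.Icc 0 (a / b₂), x t ∈ Set.Icc 0 a) ∧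
      ∀ t ∈ Set.Ico 0 (a / b₂),
        Tendsto (fun s => (s - t)⁻¹ * (x s - x t)) (nhdsWithin t (Set.Ioi t))
          (nhds (f (x t))) := by
  have hb₂ : 0 < b₂ := lt_of_lt_of_le hb₁ hb
  set G : ℝ → ℝ := fun u => (f u)⁻¹ with hGdef
  -- integrability
  have hGon : IntegrableOn G (Set.Icc 0 a) volume := by
    refine ⟨((meas_aux a ha f hrc).inv).aestronglyMeasurable, ?_⟩
    apply HasFiniteIntegral.restrict_of_bounded (C := b₁⁻¹)
      (measure_Icc_lt_top)
    filter_upwards [ae_restrict_mem measurableSet_Icc] with u hu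
    have h1 := (hrange u hu).1
    have hfu : 0 < f u := lt_of_lt_of_le hb₁ h1
    rw [Real.norm_eq_abs, abs_of_pos (inv_pos.mpr hfu)]
    exact inv_anti₀ hb₁ h1
  have hGint : ∀ p q, p ∈ Set.Icc 0 a → q ∈ Set.Icc 0 a →
      IntervalIntegrable G volume p q := by
    intro p q hp hq
    apply MeasureTheory.IntegrableOn.intervalIntegrable
    apply hGon.mono_set
    exact Set.uIcc_subset_Icc hp hq
  set F : ℝ → ℝ := fun y => ∫ u in (0:ℝ)..y, G u with hFdef
  have hF0 : F 0 = 0 := intervalIntegral.integral_same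
  have h0a : (0:ℝ) ∈ Set.Icc 0 a := ⟨le_refl 0, ha.le⟩
  have haa : a ∈ Set.Icc (0:ℝ) a := ⟨ha.le, le_refl a⟩
  have hFsub : ∀ p q, p ∈ Set.Icc 0 a → q ∈ Set.Icc 0 a →
      F q - F p = ∫ u in p..q, G u := by
    intro p q hp hq
    have := intervalIntegral.integral_add_adjacent_intervals
      (hGint 0 p h0a hp) (hGint p q hp hq)
    simp only [hFdef]
    linarith [this]
  have hGb : ∀ p q, p ∈ Set.Icc 0 a → q ∈ Set.Icc 0 a → p ≤ q →
      b₂⁻¹ * (q - p) ≤ F q - F p ∧ F q - F p ≤ b₁⁻¹ * (q - p) := by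
    intro p q hp hq hpq
    rw [hFsub p q hp hq]
    have hmem : ∀ u ∈ Set.Icc p q, u ∈ Set.Icc 0 a := fun u hu =>
      ⟨le_trans hp.1 hu.1, le_trans hu.2 hq.2⟩
    constructor
    · have := intervalIntegral.integral_mono_on hpq
        (intervalIntegrable_const (c := b₂⁻¹)) (hGint p q hp hq)
        (fun u hu => by
          have h2 := (hrange u (hmem u hu)).2
          have hfu : 0 < f u := lt_of_lt_of_le hb₁ (hrange u (hmem u hu)).1
          exact inv_anti₀ hfu h2)
      simpa [mul_comm] using this
    · have := intervalIntegral.integral_mono_on hpq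
        (hGint p q hp hq) (intervalIntegrable_const (c := b₁⁻¹))
        (fun u hu => by
          have h1 := (hrange u (hmem u hu)).1
          exact inv_anti₀ hb₁ h1)
      simpa [mul_comm] using this
  have hFstrict : StrictMonoOn F (Set.Icc 0 a) := by
    intro p hp q hq hpq
    have h1 := (hGb p q hp hq hpq.le).1
    have h2 : 0 < b₂⁻¹ * (q - p) := mul_pos (inv_pos.mpr hb₂) (sub_pos.mpr hpq)
    linarith
  have hFlip : LipschitzOnWith (Real.toNNReal b₁⁻¹) F (Set.Icc 0 a) := by
    apply LipschitzOnWith.of_dist_le_mul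
    intro p hp q hq
    rw [Real.dist_eq, Real.dist_eq, Real.coe_toNNReal _ (by positivity)]
    rcases le_total p q with h | h
    · have hl := (hGb p q hp hq h).1
      have hu := (hGb p q hp hq h).2
      have hnn : 0 ≤ b₂⁻¹ * (q - p) := mul_nonneg (inv_pos.mpr hb₂).le (sub_nonneg.mpr h)
      rw [abs_of_nonpos (by linarith), abs_of_nonpos (by linarith)]
      linarith
    · have hl := (hGb q p hq hp h).1
      have hu := (hGb q p hq hp h).2
      have hnn : 0 ≤ b₂⁻¹ * (p - q) := mul_nonneg (inv_pos.mpr hb₂).le (sub_nonneg.mpr h)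
      rw [abs_of_nonneg (by linarith), abs_of_nonneg (by linarith)]
      linarith
  have hFcont : ContinuousOn F (Set.Icc 0 a) := hFlip.continuousOn
  set T : ℝ := F a with hTdef
  have hT : a / b₂ ≤ T := by
    have := (hGb 0 a h0a haa ha.le).1
    rw [hF0] at this
    rw [div_eq_inv_mul]
    linarith
  have hT0 : 0 < a / b₂ := by positivity
  have hsurj : Set.Icc (0:ℝ) T ⊆ F '' Set.Icc 0 a := by
    have := intermediate_value_Icc ha.le hFcont
    rwa [hF0] at this
  -- define x
  set x : ℝ → ℝ := fun t => if h : t ∈ Set.Icc (0:ℝ) T then (hsurj h).choose else 0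
    with hxdef
  have hx : ∀ t ∈ Set.Icc (0:ℝ) T, x t ∈ Set.Icc 0 a ∧ F (x t) = t := by
    intro t ht
    simp only [hxdef, dif_pos ht]
    exact ⟨(hsurj ht).choose_spec.1, (hsurj ht).choose_spec.2⟩
  have hsub : Set.Icc (0:ℝ) (a / b₂) ⊆ Set.Icc 0 T := fun t ht =>
    ⟨ht.1, le_trans ht.2 hT⟩
  have hxmono : ∀ s ∈ Set.Icc (0:ℝ) T, ∀ t ∈ Set.Icc (0:ℝ) T, s < t →
      x s < x t ∧ x t - x s ≤ b₂ * (t - s) := by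
    intro s hs t ht hst
    obtain ⟨hxs, hFs⟩ := hx s hs
    obtain ⟨hxt, hFt⟩ := hx t ht
    have hlt : x s < x t := by
      rcases lt_trichotomy (x s) (x t) with h | h | h
      · exact h
      · rw [h, hFt] at hFs; linarith
      · have := hFstrict hxt hxs h; rw [hFs, hFt] at this; linarith
    refine ⟨hlt, ?_⟩
    have := (hGb (x s) (x t) hxs hxt hlt.le).1
    rw [hFs, hFt] at this
    have h2 := mul_le_mul_of_nonneg_left this hb₂.le
    rw [← mul_assoc, mul_inv_cancel₀ hb₂.ne', one_mul] at h2
    exact h2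
  have hx0 : x 0 = 0 := by
    have h0T : (0:ℝ) ∈ Set.Icc (0:ℝ) T := ⟨le_refl 0, le_trans hT0.le hT⟩
    obtain ⟨hm, hF⟩ := hx 0 h0T
    have := hFstrict.injOn hm h0a (by rw [hF, hF0])
    exact this
  refine ⟨x, ?_, hx0, fun t ht => (hx t (hsub ht)).1, ?_⟩
  · -- Lipschitz
    apply LipschitzOnWith.of_dist_le_mul
    intro p hp q hq
    rw [Real.dist_eq, Real.dist_eq, Real.coe_toNNReal _ hb₂.le]
    rcases lt_trichotomy p q with h | h | h
    · obtain ⟨h1, h2⟩ := hxmono p (hsub hp) q (hsub hq) h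
      rw [abs_of_nonpos (by linarith), abs_of_nonpos (by linarith)]
      linarith
    · simp [h]
    · obtain ⟨h1, h2⟩ := hxmono q (hsub hq) p (hsub hp) h
      rw [abs_of_nonneg (by linarith), abs_of_nonneg (by linarith)]
      linarith
  · -- right derivative
    intro t ht
    have htT : t ∈ Set.Icc (0:ℝ) T := ⟨ht.1, le_trans ht.2.le hT⟩
    obtain ⟨hyt, hFy⟩ := hx t htT
    set y := x t with hydef
    have hya : y < a := by
      rcases lt_or_eq_of_le hyt.2 with h | h
      · exact h
      · exfalso
        have hFa : T = t := by rw [hTdef, ← h, hFy]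
        have := ht.2; rw [← hFa] at this; linarith
    rw [Metric.tendsto_nhdsWithin_nhds]
    intro ε hε
    set ε' : ℝ := min (ε / 2) (b₁ / 2) with hε'def
    have hε' : 0 < ε' := lt_min (by linarith) (by linarith)
    have hε'b : ε' ≤ b₁ / 2 := min_le_right _ _
    have hε'ε : ε' ≤ ε / 2 := min_le_left _ _
    -- right continuity at y
    have hyIco : y ∈ Set.Ico 0 a := ⟨hyt.1, hya⟩
    have := hrc y hyIco
    rw [Metric.tendsto_nhdsWithin_nhds] at this
    obtain ⟨δ₁, hδ₁, hδ₁p⟩ := this ε' hε'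
    set δ : ℝ := min (δ₁ / b₂) (T - t) with hδdef
    have hTt : 0 < T - t := by
      have := ht.2; linarith [hT]
    have hδ : 0 < δ := lt_min (by positivity) hTt
    refine ⟨δ, hδ, ?_⟩
    intro s hs hds
    rw [Set.mem_Ioi] at hs
    rw [Real.dist_eq, abs_of_pos (sub_pos.mpr hs)] at hds
    have hsT : s ∈ Set.Icc (0:ℝ) T := by
      constructor
      · linarith [htT.1]
      · have : s - t < T - t := lt_of_lt_of_le hds (min_le_right _ _)
        linarith
    obtain ⟨hzs, hFz⟩ := hx s hsT
    set z := x s with hzdef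
    obtain ⟨hyz, hzlip⟩ := hxmono t htT s hsT hs
    -- z - y < δ₁
    have hzy : z - y < δ₁ := by
      have h1 : z - y ≤ b₂ * (s - t) := hzlip
      have h2 : s - t < δ₁ / b₂ := lt_of_lt_of_le hds (min_le_left _ _)
      calc z - y ≤ b₂ * (s - t) := h1
        _ < b₂ * (δ₁ / b₂) := by
          apply mul_lt_mul_of_pos_left h2 hb₂
        _ = δ₁ := by field_simp
    -- f close to f y on Ioc y z
    have hfc : ∀ u ∈ Set.Icc y z, f y - ε' ≤ f u ∧ f u ≤ f y + ε' := by
      intro u hu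
      rcases eq_or_lt_of_le hu.1 with h | h
      · rw [← h]; constructor <;> linarith
      · have hu' : u ∈ Set.Ioc y a := ⟨h, le_trans hu.2 hzs.2⟩
        have hd : dist u y < δ₁ := by
          rw [Real.dist_eq, abs_of_pos (sub_pos.mpr h)]
          linarith [hu.2]
        have := hδ₁p hu' hd
        rw [Real.dist_eq, abs_lt] at this
        constructor <;> linarith [this.1, this.2]
    have hfyp : 0 < f y - ε' := by
      have := (hrange y hyt).1; linarith
    -- integral bounds
    have hst' : s - t = ∫ u in y..z, G u := by
      rw [← hFy, ← hFz]; exact hFsub y z hyt hzs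
    have hintlow : (f y + ε')⁻¹ * (z - y) ≤ s - t := by
      rw [hst']
      have := intervalIntegral.integral_mono_on hyz.le
        (intervalIntegrable_const (c := (f y + ε')⁻¹)) (hGint y z hyt hzs)
        (fun u hu => by
          have h2 := (hfc u hu).2
          have hfu : 0 < f u := lt_of_lt_of_le hb₁ (hrange u
            ⟨le_trans hyt.1 hu.1, le_trans hu.2 hzs.2⟩).1
          exact inv_anti₀ hfu h2)
      simpa [mul_comm] using this
    have hinthigh : s - t ≤ (f y - ε')⁻¹ * (z - y) := by
      rw [hst']
      have := intervalIntegral.integral_mono_on hyz.le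
        (hGint y z hyt hzs) (intervalIntegrable_const (c := (f y - ε')⁻¹))
        (fun u hu => by
          have := (hfc u hu).1
          exact inv_anti₀ hfyp this)
      simpa [mul_comm] using this
    -- conclude
    have hstpos : 0 < s - t := sub_pos.mpr hs
    have hzypos : 0 < z - y := sub_pos.mpr hyz
    have hfyP : 0 < f y + ε' := by
      have := (hrange y hyt).1; linarith
    have hR1 : (s - t)⁻¹ * (z - y) ≤ f y + ε' := by
      rw [inv_mul_le_iff₀ hstpos]
      calc z - y = (f y + ε') * ((f y + ε')⁻¹ * (z - y)) := by
            rw [← mul_assoc, mul_inv_cancel₀ hfyP.ne', one_mul]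
        _ ≤ (f y + ε') * (s - t) := by
            exact mul_le_mul_of_nonneg_left hintlow hfyP.le
        _ = (s - t) * (f y + ε') := mul_comm _ _
    have hR2 : f y - ε' ≤ (s - t)⁻¹ * (z - y) := by
      rw [le_inv_mul_iff₀ hstpos]
      calc (s - t) * (f y - ε') ≤ ((f y - ε')⁻¹ * (z - y)) * (f y - ε') := by
            exact mul_le_mul_of_nonneg_right hinthigh hfyp.le
        _ = z - y := by field_simp
    rw [Real.dist_eq, abs_lt]
    constructor
    · have : f y - ε' ≤ (s - t)⁻¹ * (z - y) := hR2
      have : ε' < ε := lt_of_le_of_lt hε'ε (by linarith)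
      linarith [hR2]
    · have : ε' < ε := lt_of_le_of_lt hε'ε (by linarith)
      linarith [hR1]
end
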